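/- arXiv:1610.06743 — 6 statements merged into one kernel-verified Lean document; each statement's English description precedes it below -/
import Mathlib

section
/- Discrete maximum principle for the follow-the-leader scheme: for the Cauchy FTL scheme, the solution (xᵢⁿ)_{i=1}^{n−1} satisfies xᵢ₊₁ⁿ(t) − xᵢⁿ(t) ≥ ℓₙ/R for all t ≥ 0 and all i ∈ {1,…,n−2}. In particular the particles strictly preserve their initial order for all times. -/
/-!
Initially every gap is at least `ℓ / R`: a piece of mass `ℓ` of a density bounded by `R` has
length at least `ℓ / R`. The bound then propagates backwards from the leader. If the gap ahead of
particle `i + 1` is at least `ℓ / R`, that particle moves at speed at least `v R` because `v` is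
decreasing, so the gap `g` behind it satisfies `g' ≥ v R - v (ℓ / g)`. Differentiability of `v`
at `R` bounds the right-hand side below by `-K (ℓ / R - g)` when `g` is slightly below `ℓ / R`,
and a comparison with an exponential barrier shows that `g` can never drop below `ℓ / R`.
-/

open MeasureTheory Set Filter Topology

section EssSup

variable {α E : Type*} [MeasurableSpace α] {μ : Measure α} [NormedAddCommGroup E] {f : α → E}

theorem ae_norm_le_of_eLpNorm_top_le {R : ℝ} (hR : 0 ≤ R) (h : eLpNorm f ⊤ μ ≤ ENNReal.ofReal R) :
    ∀ᵐ y ∂μ, ‖f y‖ ≤ R := by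
  filter_upwards [ae_le_eLpNormEssSup (μ := μ) (f := f)] with y hy
  rw [← eLpNorm_exponent_top] at hy
  rw [← ENNReal.ofReal_le_ofReal_iff hR, ofReal_norm]
  exact hy.trans h

theorem le_of_eLpNorm_top_eq_of_ae_norm_le {R C : ℝ} (hR : 0 < R)
    (h : eLpNorm f ⊤ μ = ENNReal.ofReal R) (hC : ∀ᵐ y ∂μ, ‖f y‖ ≤ C) : R ≤ C := by
  have := eLpNormEssSup_le_of_ae_bound hC
  rw [← eLpNorm_exponent_top, h] at this
  exact (ENNReal.ofReal_le_ofReal_iff'.mp this).resolve_right hR.not_ge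

end EssSup

section Quantile

variable {F : ℝ → ℝ} {m : ℝ}

theorem bddAbove_setOf_lt_of_monotone (hF : Monotone F) {y₀ : ℝ} (hy₀ : m < F y₀) :
    BddAbove {y | F y < m} :=
  ⟨y₀, fun _ hy => (hF.reflect_lt (lt_trans hy hy₀)).le⟩

theorem apply_csSup_setOf_lt_le (hF : Continuous F) (hne : {y | F y < m}.Nonempty)
    (hbdd : BddAbove {y | F y < m}) : F (sSup {y | F y < m}) ≤ m :=
  closure_lt_subset_le hF continuous_const (csSup_mem_closure hne hbdd)

theorem add_div_le_csSup_setOf_lt {R ℓ a : ℝ} (hR : 0 < R) (hℓ : 0 < ℓ) (hF : Monotone F)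
    (hlip : ∀ y₁ y₂, y₁ ≤ y₂ → F y₂ ≤ F y₁ + R * (y₂ - y₁))
    (hbdd : BddAbove {y | F y < F a + ℓ}) : a + ℓ / R ≤ sSup {y | F y < F a + ℓ} := by
  rw [← csSup_Iio (a := a + ℓ / R)]
  refine csSup_le_csSup hbdd nonempty_Iio fun y hy => ?_
  rcases le_total y a with hya | hay
  · exact (hF hya).trans_lt (lt_add_of_pos_right _ hℓ)
  · have : R * (y - a) < ℓ := by
      rw [← lt_div_iff₀' hR]; exact sub_left_lt_of_lt_add hy
    exact (hlip a y hay).trans_lt (by linarith)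

end Quantile

section Cumulative

variable {f : ℝ → ℝ}

theorem setIntegral_Iic_add_setIntegral_Ioc (hf : Integrable f) {y₁ y₂ : ℝ} (h : y₁ ≤ y₂) :
    (∫ s in Iic y₁, f s) + ∫ s in Ioc y₁ y₂, f s = ∫ s in Iic y₂, f s := by
  rw [← Iic_union_Ioc_eq_Iic h, setIntegral_union (Iic_disjoint_Ioc le_rfl) measurableSet_Ioc
    hf.integrableOn hf.integrableOn]

theorem monotone_setIntegral_Iic (hf : Integrable f) (hf₀ : 0 ≤ f) :
    Monotone fun y => ∫ s in Iic y, f s :=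
  fun _ _ h => setIntegral_mono_set hf.integrableOn (Eventually.of_forall hf₀)
    (Iic_subset_Iic.mpr h).eventuallyLE

theorem setIntegral_Iic_le_add_mul (hf : Integrable f) {R : ℝ} (hfR : ∀ᵐ y, f y ≤ R)
    {y₁ y₂ : ℝ} (h : y₁ ≤ y₂) :
    ∫ s in Iic y₂, f s ≤ (∫ s in Iic y₁, f s) + R * (y₂ - y₁) := by
  rw [← setIntegral_Iic_add_setIntegral_Ioc hf h]
  gcongr
  calc ∫ s in Ioc y₁ y₂, f s ≤ ∫ _ in Ioc y₁ y₂, R :=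
        setIntegral_mono_ae hf.integrableOn (integrableOn_const measure_Ioc_lt_top.ne) hfR
    _ = R * (y₂ - y₁) := by
        rw [setIntegral_const, Real.volume_real_Ioc_of_le h, smul_eq_mul, mul_comm]

theorem tendsto_setIntegral_Iic_atTop (hf : Integrable f) :
    Tendsto (fun y => ∫ s in Iic y, f s) atTop (𝓝 (∫ s, f s)) :=
  (aecover_Iic tendsto_id).integral_tendsto_of_countably_generated hf

theorem tendsto_setIntegral_Iic_atBot (hf : Integrable f) :
    Tendsto (fun y => ∫ s in Iic y, f s) atBot (𝓝 0) := by
  have hIoi := ((aecover_Ioi tendsto_id).integral_tendsto_of_countably_generated hf).const_sub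
    (∫ s, f s)
  rw [sub_self] at hIoi
  refine hIoi.congr fun y => ?_
  simp only [id]
  rw [← integral_add_compl measurableSet_Iic hf, compl_Iic, add_sub_cancel_right]

theorem continuous_setIntegral_Iic (hf : Integrable f) : Continuous fun y => ∫ s in Iic y, f s :=
  ((intervalIntegral.continuous_primitive (fun _ _ => hf.intervalIntegrable) 0).const_add
    (∫ s in Iic 0, f s)).congr fun y => by
      rw [← intervalIntegral.integral_Iic_sub_Iic hf.integrableOn hf.integrableOn, add_sub_cancel]

theorem bddAbove_setOf_setIntegral_Iic_lt (hf : Integrable f) (hf₀ : 0 ≤ f) {m : ℝ}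
    (hm : m < ∫ y, f y) : BddAbove {y | (∫ s in Iic y, f s) < m} :=
  have ⟨_, hy₀⟩ := ((tendsto_setIntegral_Iic_atTop hf).eventually (eventually_gt_nhds hm)).exists
  bddAbove_setOf_lt_of_monotone (monotone_setIntegral_Iic hf hf₀) hy₀

theorem setOf_setIntegral_Ioc_lt (hf : Integrable f) (hf₀ : 0 ≤ f) {a ℓ : ℝ} (hℓ : 0 < ℓ) :
    {y | (∫ s in Ioc a y, f s) < ℓ} = {y | (∫ s in Iic y, f s) < (∫ s in Iic a, f s) + ℓ} := by
  ext y
  rcases le_total a y with hay | hya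
  · simp only [mem_ofPred_eq, ← setIntegral_Iic_add_setIntegral_Ioc hf hay, add_lt_add_iff_left]
  · rw [mem_ofPred_eq, mem_ofPred_eq, Ioc_eq_empty (not_lt.mpr hya), Measure.restrict_empty,
      integral_zero_measure]
    exact iff_of_true hℓ ((monotone_setIntegral_Iic hf hf₀ hya).trans_lt
      (lt_add_of_pos_right _ hℓ))

theorem mul_add_lt_of_add_one_lt {j n : ℕ} {ℓ M : ℝ} (hℓ : 0 < ℓ) (hM : n * ℓ ≤ M)
    (hj : j + 1 < n) : j * ℓ + ℓ < M := by
  have : ((j + 1 : ℕ) : ℝ) < n := by exact_mod_cast hj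
  push_cast at this
  nlinarith

theorem setIntegral_Iic_quantile_le (hf : Integrable f) (hf₀ : 0 ≤ f) {ℓ : ℝ} (hℓ : 0 < ℓ)
    {n : ℕ} (hmass : n * ℓ ≤ ∫ y, f y) {xbar : ℕ → ℝ}
    (hxbar1 : xbar 1 = sSup {y | (∫ s in Iic y, f s) < ℓ})
    (hxbar : ∀ i, 2 ≤ i → i ≤ n - 1 →
      xbar i = sSup {y | (∫ s in Iic y, f s) < (∫ s in Iic (xbar (i - 1)), f s) + ℓ}) :
    ∀ i, 1 ≤ i → i ≤ n - 1 → ∫ s in Iic (xbar i), f s ≤ i * ℓ := by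
  intro i hi
  induction i, hi using Nat.le_induction with
  | base =>
    intro hn
    have hne : {y | (∫ s in Iic y, f s) < ℓ}.Nonempty :=
      ((tendsto_setIntegral_Iic_atBot hf).eventually (eventually_lt_nhds hℓ)).exists
    have hbdd := bddAbove_setOf_setIntegral_Iic_lt hf hf₀
      (by simpa using mul_add_lt_of_add_one_lt hℓ hmass (j := 0) (by omega))
    rw [hxbar1, Nat.cast_one, one_mul]
    exact apply_csSup_setOf_lt_le (continuous_setIntegral_Iic hf) hne hbdd
  | succ i hi ih =>
    intro hin
    have hxi := ih (by omega)
    have hbdd := bddAbove_setOf_setIntegral_Iic_lt hf hf₀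
      (m := (∫ s in Iic (xbar i), f s) + ℓ)
      (by linarith [mul_add_lt_of_add_one_lt hℓ hmass (j := i) (by omega)])
    rw [hxbar (i + 1) (by omega) hin, Nat.add_sub_cancel]
    refine (apply_csSup_setOf_lt_le (continuous_setIntegral_Iic hf)
      ⟨xbar i, lt_add_of_pos_right _ hℓ⟩ hbdd).trans ?_
    push_cast
    linarith

theorem add_div_le_of_atomization (hf : Integrable f) (hf₀ : 0 ≤ f) {R ℓ : ℝ} (hR : 0 < R)
    (hfR : ∀ᵐ y, f y ≤ R) (hℓ : 0 < ℓ) {n : ℕ} (hmass : n * ℓ ≤ ∫ y, f y) {xbar : ℕ → ℝ}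
    (hxbar1 : xbar 1 = sSup {y | (∫ s in Iio y, f s) < ℓ})
    (hxbar : ∀ i, 2 ≤ i → i ≤ n - 1 →
      xbar i = sSup {y | (∫ s in Ioc (xbar (i - 1)) y, f s) < ℓ}) :
    ∀ i, 2 ≤ i → i ≤ n - 1 → xbar (i - 1) + ℓ / R ≤ xbar i := by
  have hxbar' : ∀ i, 2 ≤ i → i ≤ n - 1 → xbar i =
      sSup {y | (∫ s in Iic y, f s) < (∫ s in Iic (xbar (i - 1)), f s) + ℓ} :=
    fun i hi2 hin => by rw [hxbar i hi2 hin, setOf_setIntegral_Ioc_lt hf hf₀ hℓ]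
  have hmass_le := setIntegral_Iic_quantile_le hf hf₀ hℓ hmass
    (by simpa only [setIntegral_congr_set Iio_ae_eq_Iic] using hxbar1) hxbar'
  intro i hi2 hin
  rw [hxbar' i hi2 hin]
  refine add_div_le_csSup_setOf_lt hR hℓ (monotone_setIntegral_Iic hf hf₀)
    (fun _ _ => setIntegral_Iic_le_add_mul hf hfR) (bddAbove_setOf_setIntegral_Iic_lt hf hf₀ ?_)
  linarith [hmass_le (i - 1) (by omega) (by omega),
    mul_add_lt_of_add_one_lt hℓ hmass (j := i - 1) (by omega)]

end Cumulative

theorem nonpos_of_hasDerivWithinAt_le_mul {f f' : ℝ → ℝ} {a δ K : ℝ} (hδ : 0 < δ)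
    (hf : ∀ t ∈ Ici a, HasDerivWithinAt f (f' t) (Ici a) t) (ha : f a ≤ 0)
    (hbound : ∀ t ∈ Ici a, 0 < f t → f t ≤ δ → f' t ≤ K * f t) :
    ∀ t ∈ Ici a, f t ≤ 0 := by
  intro t ht
  refine le_of_forall_pos_le_add fun η hη => ?_
  -- on `[a, t]` the barrier `B` stays in `(0, δ]` and outgrows `K f` wherever it touches `f`
  set ε := min η δ
  have hε : 0 < ε := lt_min hη hδ
  set B : ℝ → ℝ := fun s => ε * Real.exp ((|K| + 1) * (s - t))
  have hB : ∀ s, HasDerivAt B ((|K| + 1) * B s) s := fun s =>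
    ((((hasDerivAt_id' s).sub_const t).const_mul (|K| + 1)).exp.const_mul ε).congr_deriv
      (by simp only [B]; ring)
  have hBpos : ∀ s, 0 < B s := fun s => mul_pos hε (Real.exp_pos _)
  have hBle : ∀ s ≤ t, B s ≤ δ := fun s hs =>
    calc B s ≤ ε * 1 := by
          show ε * Real.exp _ ≤ _
          gcongr
          exact Real.exp_le_one_iff.mpr
            (mul_nonpos_of_nonneg_of_nonpos (by positivity) (sub_nonpos.mpr hs))
      _ ≤ δ := (mul_one ε).trans_le (min_le_right η δ)
  have hfB := image_le_of_deriv_right_lt_deriv_boundary'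
    (fun s hs => (hf s hs.1).continuousWithinAt.mono Icc_subset_Ici_self)
    (fun s hs => (hf s hs.1).mono (Ici_subset_Ici.mpr hs.1)) (ha.trans (hBpos a).le)
    (fun s _ => (hB s).continuousAt.continuousWithinAt) (fun s _ => (hB s).hasDerivWithinAt)
    (fun s hs hfs => by
      have := hbound s hs.1 (hfs ▸ hBpos s) (hfs ▸ hBle s hs.2.le)
      rw [hfs] at this
      nlinarith [le_abs_self K, hBpos s])
    ⟨ht, le_rfl⟩
  calc f t ≤ B t := hfB
    _ = ε := by simp [B]
    _ ≤ 0 + η := by rw [zero_add]; exact min_le_left η δ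

theorem div_le_sub_of_follow {v w y z : ℝ → ℝ} {ℓ ρ : ℝ} (hℓ : 0 < ℓ) (hρ : 0 < ρ)
    (hv : DifferentiableAt ℝ v ρ)
    (hy : ∀ t, 0 ≤ t → HasDerivWithinAt y (v (ℓ / (z t - y t))) (Ici 0) t)
    (hz : ∀ t, 0 ≤ t → HasDerivWithinAt z (w t) (Ici 0) t) (hw : ∀ t, 0 ≤ t → v ρ ≤ w t)
    (h0 : ℓ / ρ ≤ z 0 - y 0) : ∀ t, 0 ≤ t → ℓ / ρ ≤ z t - y t := by
  set c := ℓ / ρ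
  have hc : 0 < c := div_pos hℓ hρ
  have hℓc : ℓ / c = ρ := div_div_cancel₀ hℓ.ne'
  have hφ : DifferentiableAt ℝ (fun g => v (ℓ / g)) c :=
    (hℓc ▸ hv).comp c ((differentiableAt_const ℓ).div differentiableAt_id hc.ne')
  obtain ⟨C, hC⟩ := hφ.isBigO_sub.bound
  obtain ⟨δ, hδ, hnear⟩ := Metric.eventually_nhds_iff.mp hC
  have hgap := nonpos_of_hasDerivWithinAt_le_mul (f := fun t => c - (z t - y t)) (K := C)
    (half_pos hδ) (fun t ht => ((hz t ht).sub (hy t ht)).const_sub c) (by simpa using h0)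
    (fun t ht hpos hsmall => by
      have hdist : dist (z t - y t) c < δ := by
        rw [Real.dist_eq, abs_sub_comm, abs_of_pos hpos]; linarith
      have hlip := (le_abs_self _).trans (Real.norm_eq_abs _ ▸ hnear hdist)
      rw [hℓc, Real.norm_eq_abs, abs_sub_comm, abs_of_pos hpos] at hlip
      linarith [hw t ht])
  exact fun t ht => sub_nonpos.mp (hgap t ht)

theorem div_le_sub_of_followTheLeader {v w : ℝ → ℝ} {ℓ ρ : ℝ} (hℓ : 0 < ℓ) (hρ : 0 < ρ)
    (hv : DifferentiableAt ℝ v ρ) (hanti : AntitoneOn v (Icc 0 ρ)) {x : ℕ → ℝ → ℝ} {m : ℕ}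
    (hODE : ∀ i, 1 ≤ i → i ≤ m → ∀ t, 0 ≤ t →
      HasDerivWithinAt (x i) (v (ℓ / (x (i + 1) t - x i t))) (Ici 0) t)
    (hlead : ∀ t, 0 ≤ t → HasDerivWithinAt (x (m + 1)) (w t) (Ici 0) t)
    (hw : ∀ t, 0 ≤ t → v ρ ≤ w t)
    (h0 : ∀ i, 1 ≤ i → i ≤ m → ℓ / ρ ≤ x (i + 1) 0 - x i 0) :
    ∀ i, 1 ≤ i → i ≤ m → ∀ t, 0 ≤ t → ℓ / ρ ≤ x (i + 1) t - x i t := by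
  intro i hi him
  induction him using Nat.decreasingInduction with
  | self => exact div_le_sub_of_follow hℓ hρ hv (hODE m hi le_rfl) hlead hw (h0 m hi le_rfl)
  | of_succ k hk ih =>
    refine div_le_sub_of_follow hℓ hρ hv (hODE k hi hk.le) (hODE (k + 1) (by omega) hk)
      (fun t ht => ?_) (h0 k hi hk.le)
    have hgap := ih (by omega) t ht
    have hpos : 0 < x (k + 1 + 1) t - x (k + 1) t := (div_pos hℓ hρ).trans_le hgap
    have hdens : ℓ / (x (k + 1 + 1) t - x (k + 1) t) ≤ ρ := (div_le_comm₀ hpos hρ).mpr hgap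
    exact hanti ⟨div_nonneg hℓ.le hpos.le, hdens⟩ ⟨hρ.le, le_rfl⟩ hdens

theorem stmt1_general
    -- velocity hypothesis (V1)
    (ρmax vmax : ℝ)
    (v v' : ℝ → ℝ)
    (hv_deriv : ∀ r ∈ Set.Icc (0:ℝ) ρmax, HasDerivAt v (v' r) r)
    (hv'_neg : ∀ r ∈ Set.Icc (0:ℝ) ρmax, v' r < 0)
    (hv_range : ∀ r ∈ Set.Icc (0:ℝ) ρmax, v r ∈ Set.Icc (0:ℝ) vmax)
    -- initial datum (I1)
    (rbar : ℝ → ℝ) (hrbar_int : Integrable rbar)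
    (hrbar_range : ∀ y, rbar y ∈ Set.Icc (0:ℝ) ρmax)
    (L R : ℝ) (hL : L = ∫ y, rbar y) (hLpos : 0 < L)
    (hR : eLpNorm rbar ⊤ volume = ENNReal.ofReal R) (hRpos : 0 < R)
    -- atomization of the initial datum
    (n : ℕ) (hn : 3 ≤ n)
    (xbar : ℕ → ℝ)
    (hxbar1 : xbar 1 = sSup {y : ℝ | (∫ s in Set.Iio y, rbar s) < L / n})
    (hxbar : ∀ i, 2 ≤ i → i ≤ n - 1 →
        xbar i = sSup {y : ℝ | (∫ s in Set.Ioc (xbar (i-1)) y, rbar s) < L / n})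
    -- the follow-the-leader system
    (x : ℕ → ℝ → ℝ)
    (hODE : ∀ i, 1 ≤ i → i ≤ n - 2 → ∀ t, 0 ≤ t →
        HasDerivWithinAt (x i) (v ((L / n) / (x (i+1) t - x i t))) (Set.Ici 0) t)
    (hlead : ∀ t, 0 ≤ t → HasDerivWithinAt (x (n-1)) vmax (Set.Ici 0) t)
    (hIC : ∀ i, 1 ≤ i → i ≤ n - 1 → x i 0 = xbar i) :
    (∀ t, 0 ≤ t → ∀ i, 1 ≤ i → i ≤ n - 2 → (L / n) / R ≤ x (i+1) t - x i t) ∧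
    (∀ t, 0 ≤ t → ∀ i, 1 ≤ i → i ≤ n - 2 → x i t < x (i+1) t) := by
  set ℓ := L / n
  have hnpos : (0 : ℝ) < n := by exact_mod_cast (by omega : 0 < n)
  have hℓ : 0 < ℓ := div_pos hLpos hnpos
  have hrbarR : ∀ᵐ y, rbar y ≤ R := (ae_norm_le_of_eLpNorm_top_le hRpos.le hR.le).mono
    fun y hy => (Real.le_norm_self _).trans hy
  have hRρ : R ≤ ρmax := le_of_eLpNorm_top_eq_of_ae_norm_le hRpos hR (.of_forall fun y => by
    rw [Real.norm_of_nonneg (hrbar_range y).1]; exact (hrbar_range y).2)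
  have hRmem : R ∈ Icc 0 ρmax := ⟨hRpos.le, hRρ⟩
  have hanti : AntitoneOn v (Icc 0 ρmax) := antitoneOn_of_hasDerivWithinAt_nonpos (convex_Icc _ _)
    (fun r hr => (hv_deriv r hr).continuousAt.continuousWithinAt)
    (fun r hr => (hv_deriv r (interior_subset hr)).hasDerivWithinAt)
    (fun r hr => (hv'_neg r (interior_subset hr)).le)
  have hinit := add_div_le_of_atomization hrbar_int (fun y => (hrbar_range y).1) hRpos hrbarR hℓ
    (by rw [← hL, mul_div_cancel₀ _ hnpos.ne']) hxbar1 hxbar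
  have hgaps := div_le_sub_of_followTheLeader hℓ hRpos (hv_deriv R hRmem).differentiableAt
    (hanti.mono (Icc_subset_Icc_right hRρ)) (m := n - 2) (w := fun _ => vmax) hODE
    (by rwa [show n - 2 + 1 = n - 1 by omega]) (fun _ _ => (hv_range R hRmem).2)
    (fun i hi hin => by
      have := hinit (i + 1) (by omega) (by omega)
      rw [Nat.add_sub_cancel] at this
      rw [hIC i hi (by omega), hIC (i + 1) (by omega) (by omega)]
      linarith)
  exact ⟨fun t ht i hi hin => hgaps i hi hin t ht,
    fun t ht i hi hin => sub_pos.mp ((div_pos hℓ hRpos).trans_le (hgaps i hi hin t ht))⟩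

/-- **Discrete maximum principle for the follow-the-leader scheme** (Cauchy problem).
For the Cauchy follow-the-leader scheme the gaps between consecutive particles stay bounded
below by `ℓₙ/R`; in particular the particles strictly preserve their initial order. -/
theorem stmt1
    -- velocity hypothesis (V1)
    (ρmax vmax : ℝ) (hρmax : 0 < ρmax) (hvmaxpos : 0 < vmax)
    (v v' : ℝ → ℝ)
    (hv_deriv : ∀ r ∈ Set.Icc (0:ℝ) ρmax, HasDerivAt v (v' r) r)
    (hv'_cont : ContinuousOn v' (Set.Icc (0:ℝ) ρmax))
    (hv'_neg : ∀ r ∈ Set.Icc (0:ℝ) ρmax, v' r < 0)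
    (hv_range : ∀ r ∈ Set.Icc (0:ℝ) ρmax, v r ∈ Set.Icc (0:ℝ) vmax)
    (hv0 : v 0 = vmax) (hvρmax : v ρmax = 0)
    -- initial datum (I1)
    (rbar : ℝ → ℝ) (hrbar_int : Integrable rbar)
    (hrbar_range : ∀ y, rbar y ∈ Set.Icc (0:ℝ) ρmax)
    (L R : ℝ) (hL : L = ∫ y, rbar y) (hLpos : 0 < L)
    (hR : eLpNorm rbar ⊤ volume = ENNReal.ofReal R) (hRpos : 0 < R)
    -- atomization of the initial datum
    (n : ℕ) (hn : 3 ≤ n)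
    (xbar : ℕ → ℝ)
    (hxbar1 : xbar 1 = sSup {y : ℝ | (∫ s in Set.Iio y, rbar s) < L / n})
    (hxbar : ∀ i, 2 ≤ i → i ≤ n - 1 →
        xbar i = sSup {y : ℝ | (∫ s in Set.Ioc (xbar (i-1)) y, rbar s) < L / n})
    -- the follow-the-leader system
    (x : ℕ → ℝ → ℝ)
    (hODE : ∀ i, 1 ≤ i → i ≤ n - 2 → ∀ t, 0 ≤ t →
        HasDerivWithinAt (x i) (v ((L / n) / (x (i+1) t - x i t))) (Set.Ici 0) t)
    (hlead : ∀ t, 0 ≤ t → HasDerivWithinAt (x (n-1)) vmax (Set.Ici 0) t)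
    (hIC : ∀ i, 1 ≤ i → i ≤ n - 1 → x i 0 = xbar i) :
    (∀ t, 0 ≤ t → ∀ i, 1 ≤ i → i ≤ n - 2 → (L / n) / R ≤ x (i+1) t - x i t) ∧
    (∀ t, 0 ≤ t → ∀ i, 1 ≤ i → i ≤ n - 2 → x i t < x (i+1) t) :=
  stmt1_general ρmax vmax v v' hv_deriv hv'_neg hv_range rbar hrbar_int hrbar_range L R hL hLpos hR
    hRpos n hn xbar hxbar1 hxbar x hODE hlead hIC
end

section
/- Discrete Oleinik-type inequality: assume additionally that ρ ↦ ρ v'(ρ) is nonincreasing on [0,ρ_max]. Then the solution of the Cauchy FTL scheme satisfies, for every t > 0 and every i ∈ {1,…,n−2}, ẋᵢ₊₁ⁿ(t) − ẋᵢⁿ(t) ≤ (xᵢ₊₁ⁿ(t) − xᵢⁿ(t))/t; equivalently, v(Rᵢ₊₁ⁿ(t)) − v(Rᵢⁿ(t)) ≤ (xᵢ₊₁ⁿ(t) − xᵢⁿ(t))/t for i = 1,…,n−3 and v_max − v(Rⁿ_{n−2}(t)) ≤ (xⁿ_{n−1}(t) − xⁿ_{n−2}(t))/t. -/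
/-!
Consecutive atoms of the initial datum enclose mass `ℓ` of a density bounded by `ρmax`, so the
initial gaps are at least `ℓ / ρmax`. The dynamics keep them so: a gap slightly below `ℓ / ρmax`
carries a density slightly above `ρmax`, where `v ≤ 0`, while the particle ahead has nonnegative
speed, so such a gap cannot shrink. Hence every density stays in `(0, ρmax]`.

For the Oleinik bound consider `Wᵢ(t) = t (ẋᵢ₊₁ - ẋᵢ) - (xᵢ₊₁ - xᵢ)`, negative at `t = 0`. At a
first zero `τ > 0` one finds `Wᵢ'(τ) = τ ẍᵢ₊₁(τ) + Rᵢ v'(Rᵢ)`. Behind the leader `ẍᵢ₊₁ = 0`;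
otherwise `Wᵢ₊₁ < 0` (downward induction on `i`) gives `τ ẍᵢ₊₁ < -Rᵢ₊₁ v'(Rᵢ₊₁)`, and as
`Rᵢ₊₁ ≤ Rᵢ` at that time and `ρ ↦ ρ v'(ρ)` is nonincreasing, `Wᵢ'(τ) < 0`: impossible at a
first zero.
-/

open MeasureTheory Set Filter Topology

theorem neg_of_deriv_neg_of_eq_zero {f f' : ℝ → ℝ}
    (hf : ∀ t, 0 ≤ t → HasDerivWithinAt f (f' t) (Ici 0) t) (h0 : f 0 < 0)
    (hzero : ∀ t, 0 < t → f t = 0 → f' t < 0) : ∀ t, 0 ≤ t → f t < 0 := by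
  intro t₁ ht₁
  by_contra! hf₁
  set S := Icc 0 t₁ ∩ f ⁻¹' Ici 0
  have hS : IsClosed S := ContinuousOn.preimage_isClosed_of_isClosed
    (fun t ht => (hf t ht.1).continuousWithinAt.mono Icc_subset_Ici_self) isClosed_Icc isClosed_Ici
  have hSbdd : BddBelow S := ⟨0, fun s hs => hs.1.1⟩
  have hτS : sInf S ∈ S := hS.csInf_mem ⟨t₁, ⟨ht₁, le_rfl⟩, hf₁⟩ hSbdd
  set τ := sInf S
  have hτ : 0 < τ := hτS.1.1.lt_of_ne fun h => h0.not_ge (h ▸ hτS.2)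
  have hbefore : ∀ s ∈ Ioo 0 τ, f s < 0 := fun s hs => by
    by_contra! h
    exact (csInf_le hSbdd ⟨⟨hs.1.le, hs.2.le.trans hτS.1.2⟩, h⟩).not_gt hs.2
  have hd : HasDerivAt f (f' τ) τ := (hf τ hτ.le).hasDerivAt (Ici_mem_nhds hτ)
  have hτ0 : f τ = 0 := by
    refine le_antisymm (le_of_tendsto (hd.continuousAt.tendsto.mono_left
      (nhdsWithin_le_nhds (s := Iio τ))) ?_) hτS.2
    filter_upwards [Ioo_mem_nhdsLT hτ] with s hs using (hbefore s hs).le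
  -- a negative derivative at the first zero would make `f` positive just before it
  have hslope : ∀ᶠ s in 𝓝[<] τ, slope f τ s < 0 :=
    hd.hasDerivWithinAt.limsup_slope_le' (lt_irrefl τ) (hzero τ hτ hτ0)
  obtain ⟨s, hslope, hs⟩ := (hslope.and (Ioo_mem_nhdsLT hτ)).exists
  rw [slope_comm, slope_def_field] at hslope
  linarith [neg_of_div_neg_left hslope (sub_nonneg.2 hs.2.le), hbefore s hs]

theorem le_of_deriv_nonneg_of_mem_Ioo {f f' : ℝ → ℝ} {b c : ℝ}
    (hf : ∀ t, 0 ≤ t → HasDerivWithinAt f (f' t) (Ici 0) t) (h0 : b ≤ f 0) (hcb : c < b)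
    (hband : ∀ t, 0 < t → f t ∈ Ioo c b → 0 ≤ f' t) : ∀ t, 0 ≤ t → b ≤ f t := by
  intro t₁ ht₁
  by_contra! hf₁
  have hcont : ContinuousOn f (Ici 0) := fun t ht => (hf t ht).continuousWithinAt
  set S := Icc 0 t₁ ∩ f ⁻¹' Ici b
  have hS : IsClosed S :=
    (hcont.mono Icc_subset_Ici_self).preimage_isClosed_of_isClosed isClosed_Icc isClosed_Ici
  have hSbdd : BddAbove S := ⟨t₁, fun s hs => hs.1.2⟩
  have hσS : sSup S ∈ S := hS.csSup_mem ⟨0, ⟨le_rfl, ht₁⟩, h0⟩ hSbdd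
  set σ := sSup S
  have hσ₁ : σ < t₁ := hσS.1.2.lt_of_ne fun h => hf₁.not_ge (h ▸ hσS.2)
  have hafter : ∀ s ∈ Ioc σ t₁, f s < b := fun s hs => by
    by_contra! h
    exact (le_csSup hSbdd ⟨⟨hσS.1.1.trans hs.1.le, hs.2⟩, h⟩).not_gt hs.1
  -- just after `σ` the value of `f` lies in the band `(c, b)`, where `f` cannot decrease
  have hnear : ∀ᶠ s in 𝓝[>] σ, c < f s :=
    ((hcont σ hσS.1.1).mono (Ioi_subset_Ici hσS.1.1)).eventually (lt_mem_nhds (hcb.trans_le hσS.2))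
  obtain ⟨u, hσu, hu⟩ := mem_nhdsGT_iff_exists_Ioo_subset.1 hnear
  set a := min u t₁
  have hσa : σ < a := lt_min hσu hσ₁
  have hmono : MonotoneOn f (Icc σ a) := by
    refine monotoneOn_of_hasDerivWithinAt_nonneg (f' := f') (convex_Icc σ a)
      (hcont.mono fun s hs => hσS.1.1.trans hs.1) (fun s hs => ?_) (fun s hs => ?_)
    · rw [interior_Icc] at hs ⊢
      exact (hf s (hσS.1.1.trans hs.1.le)).mono fun r hr => hσS.1.1.trans hr.1.le
    · rw [interior_Icc] at hs
      exact hband s (hσS.1.1.trans_lt hs.1)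
        ⟨hu ⟨hs.1, hs.2.trans_le (min_le_left _ _)⟩,
          hafter s ⟨hs.1, hs.2.le.trans (min_le_right _ _)⟩⟩
  exact (hafter a ⟨hσa, min_le_right _ _⟩).not_ge
    (hσS.2.trans (hmono ⟨le_rfl, hσa.le⟩ ⟨hσa.le, le_rfl⟩ hσa.le))

theorem HasDerivAt.eventually_nhdsGT_lt_of_neg {f : ℝ → ℝ} {f' a : ℝ} (hf : HasDerivAt f f' a)
    (hf' : f' < 0) : ∀ᶠ r in 𝓝[>] a, f r < f a := by
  filter_upwards [hf.hasDerivWithinAt.limsup_slope_le' (lt_irrefl a) hf', self_mem_nhdsWithin]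
    with r hr (hra : a < r)
  rw [slope_def_field] at hr
  exact sub_neg.1 (neg_of_div_neg_left hr (sub_nonneg.2 hra.le))

theorem antitoneOn_of_hasDerivAt_nonpos {D : Set ℝ} (hD : Convex ℝ D) {f f' : ℝ → ℝ}
    (hf : ∀ x ∈ D, HasDerivAt f (f' x) x) (hf' : ∀ x ∈ D, f' x ≤ 0) : AntitoneOn f D :=
  antitoneOn_of_hasDerivWithinAt_nonpos hD (fun x hx => (hf x hx).continuousAt.continuousWithinAt)
    (fun x hx => (hf x (interior_subset hx)).hasDerivWithinAt)
    (fun x hx => hf' x (interior_subset hx))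

theorem Continuous.apply_sSup_setOf_lt {M : ℝ → ℝ} (hM : Continuous M) {m₀ m₁ c : ℝ}
    (hbot : Tendsto M atBot (𝓝 m₀)) (htop : Tendsto M atTop (𝓝 m₁)) (h₀ : m₀ < c) (h₁ : c < m₁) :
    M (sSup {y | M y < c}) = c := by
  set S := {y | M y < c}
  have hne : S.Nonempty := (hbot.eventually (gt_mem_nhds h₀)).exists
  obtain ⟨y₀, hy₀⟩ := eventually_atTop.1 (htop.eventually (lt_mem_nhds h₁))
  have hbdd : BddAbove S := ⟨y₀, fun y hy => le_of_lt (not_le.1 fun h => (hy₀ y h).not_gt hy)⟩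
  apply le_antisymm
  · exact closure_minimal (fun y (hy : M y < c) => hy.le) (isClosed_le hM continuous_const)
      (csSup_mem_closure hne hbdd)
  · refine ge_of_tendsto
      (hM.continuousAt.tendsto.mono_left (nhdsWithin_le_nhds (s := Ioi (sSup S)))) ?_
    filter_upwards [self_mem_nhdsWithin] with y hy
    exact not_lt.1 fun h => (le_csSup hbdd h).not_gt hy

theorem Nat.forall_of_downward_step {N : ℕ} {P : ℕ → Prop}
    (h : ∀ i, 1 ≤ i → i < N → (i + 1 = N ∨ P (i + 1)) → P i) : ∀ i, 1 ≤ i → i < N → P i := by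
  intro i hi hiN
  induction hk : N - i generalizing i with
  | zero => omega
  | succ k ih =>
    refine h i hi hiN ((eq_or_ne (i + 1) N).imp_right fun hne => ?_)
    exact ih (i + 1) (by omega) (by omega) (by omega)

theorem div_mem_Ioc_of_div_le {l ρ g : ℝ} (hl : 0 < l) (hρ : 0 < ρ) (h : l / ρ ≤ g) :
    l / g ∈ Ioc 0 ρ := by
  have hg : 0 < g := (div_pos hl hρ).trans_le h
  exact ⟨div_pos hl hg, (div_le_iff₀ hg).2 ((div_le_iff₀' hρ).1 h)⟩

noncomputable def cumulativeMass (ρ : ℝ → ℝ) (y : ℝ) : ℝ := ∫ s in Iic y, ρ s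

section CumulativeMass

variable {ρ : ℝ → ℝ} (hρ : Integrable ρ)
include hρ

theorem cumulativeMass_sub (a b : ℝ) :
    cumulativeMass ρ b - cumulativeMass ρ a = ∫ s in a..b, ρ s :=
  intervalIntegral.integral_Iic_sub_Iic hρ.integrableOn hρ.integrableOn

theorem continuous_cumulativeMass : Continuous (cumulativeMass ρ) := by
  have h : cumulativeMass ρ = fun y => cumulativeMass ρ 0 + ∫ s in (0 : ℝ)..y, ρ s := by
    funext y
    rw [← cumulativeMass_sub hρ]
    ring
  rw [h]
  exact continuous_const.add
    (intervalIntegral.continuous_primitive (fun _ _ => hρ.intervalIntegrable) 0)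

theorem tendsto_cumulativeMass_atTop : Tendsto (cumulativeMass ρ) atTop (𝓝 (∫ s, ρ s)) := by
  have h := tendsto_setIntegral_of_monotone (μ := volume) (s := Iic) (fun _ => measurableSet_Iic)
    (fun _ _ hab => Iic_subset_Iic.2 hab) hρ.integrableOn
  rwa [iUnion_Iic, setIntegral_univ] at h

theorem tendsto_cumulativeMass_atBot : Tendsto (cumulativeMass ρ) atBot (𝓝 0) := by
  have h := tendsto_setIntegral_of_antitone (μ := volume) (fun y : ℝ => measurableSet_Iic (a := -y))
    (fun _ _ hab => Iic_subset_Iic.2 (neg_le_neg hab)) ⟨0, hρ.integrableOn⟩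
  rw [show (⋂ y : ℝ, Iic (-y)) = ∅ from ?_, setIntegral_empty] at h
  · exact (h.comp tendsto_neg_atBot_atTop).congr fun y => by simp [cumulativeMass]
  · exact eq_empty_of_forall_notMem fun y hy => by
      have := mem_iInter.1 hy (-y + 1)
      norm_num at this

variable (hρ₀ : ∀ y, 0 ≤ ρ y)
include hρ₀

theorem monotone_cumulativeMass : Monotone (cumulativeMass ρ) := fun a b hab => by
  have := cumulativeMass_sub hρ a b
  have := intervalIntegral.integral_nonneg (μ := volume) hab fun y _ => hρ₀ y
  linarith

theorem setOf_integral_Ioc_lt {a l : ℝ} (hl : 0 < l) :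
    {y | ∫ s in Ioc a y, ρ s < l} = {y | cumulativeMass ρ y < cumulativeMass ρ a + l} := by
  ext y
  rcases le_total a y with hay | hya
  · simp only [mem_ofPred_eq, ← intervalIntegral.integral_of_le hay, ← cumulativeMass_sub hρ]
    constructor <;> intro h <;> linarith
  · have := monotone_cumulativeMass hρ hρ₀ hya
    simp only [mem_ofPred_eq, Ioc_eq_empty_of_le hya, Measure.restrict_empty, integral_zero_measure]
    constructor <;> intro <;> linarith

theorem div_le_sub_of_cumulativeMass {ρmax a b l : ℝ} (hρmax : ∀ y, ρ y ≤ ρmax) (hρmax₀ : 0 < ρmax)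
    (hl : 0 < l) (h : cumulativeMass ρ a + l ≤ cumulativeMass ρ b) : l / ρmax ≤ b - a := by
  have hab : a ≤ b := le_of_not_gt fun hba => by
    linarith [monotone_cumulativeMass hρ hρ₀ hba.le]
  have hbound : ∫ s in a..b, ρ s ≤ ∫ _ in a..b, ρmax :=
    intervalIntegral.integral_mono_on hab hρ.intervalIntegrable intervalIntegrable_const
      fun y _ => hρmax y
  rw [intervalIntegral.integral_const, smul_eq_mul, ← cumulativeMass_sub hρ] at hbound
  rw [div_le_iff₀ hρmax₀]
  linarith

theorem cumulativeMass_atom {L : ℝ} (hL : L = ∫ s, ρ s) (hL₀ : 0 < L) {n : ℕ} {xbar : ℕ → ℝ}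
    (hxbar1 : xbar 1 = sSup {y | ∫ s in Iio y, ρ s < L / n})
    (hxbar : ∀ i, 2 ≤ i → i ≤ n - 1 →
      xbar i = sSup {y | ∫ s in Ioc (xbar (i - 1)) y, ρ s < L / n}) :
    ∀ i, 1 ≤ i → i ≤ n - 1 → cumulativeMass ρ (xbar i) = i * (L / n) := by
  have hlevel : ∀ i : ℕ, 1 ≤ i → i ≤ n - 1 →
      cumulativeMass ρ (sSup {y | cumulativeMass ρ y < i * (L / n)}) = i * (L / n) :=
    fun i hi hin => by
      have hn : (0 : ℝ) < n := by exact_mod_cast (by omega : 0 < n)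
      have hin' : (i : ℝ) < n := by exact_mod_cast (by omega : i < n)
      refine (continuous_cumulativeMass hρ).apply_sSup_setOf_lt (tendsto_cumulativeMass_atBot hρ)
        (tendsto_cumulativeMass_atTop hρ) (by positivity) ?_
      calc (i : ℝ) * (L / n) < n * (L / n) := by gcongr
        _ = ∫ s, ρ s := by rw [← hL]; field_simp
  intro i hi
  induction i, hi using Nat.le_induction with
  | base =>
    intro hn
    simp_rw [hxbar1, ← integral_Iic_eq_integral_Iio]
    simpa [cumulativeMass] using hlevel 1 le_rfl hn
  | succ i hi ih =>
    intro hin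
    have hl : 0 < L / n := div_pos hL₀ (by exact_mod_cast (by omega : 0 < n))
    rw [hxbar (i + 1) (by omega) hin, Nat.add_sub_cancel, setOf_integral_Ioc_lt hρ hρ₀ hl,
      ih (by omega)]
    push_cast
    simpa [add_mul] using hlevel (i + 1) (by omega) hin

theorem div_le_sub_atom {ρmax : ℝ} (hρmax : ∀ y, ρ y ≤ ρmax) (hρmax₀ : 0 < ρmax) {L : ℝ}
    (hL : L = ∫ s, ρ s) (hL₀ : 0 < L) {n : ℕ} {xbar : ℕ → ℝ}
    (hxbar1 : xbar 1 = sSup {y | ∫ s in Iio y, ρ s < L / n})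
    (hxbar : ∀ i, 2 ≤ i → i ≤ n - 1 →
      xbar i = sSup {y | ∫ s in Ioc (xbar (i - 1)) y, ρ s < L / n}) :
    ∀ i, 1 ≤ i → i < n - 1 → L / n / ρmax ≤ xbar (i + 1) - xbar i := fun i hi hin => by
  refine div_le_sub_of_cumulativeMass hρ hρ₀ hρmax hρmax₀
    (div_pos hL₀ (by exact_mod_cast (by omega : 0 < n))) (le_of_eq ?_)
  rw [cumulativeMass_atom hρ hρ₀ hL hL₀ hxbar1 hxbar i hi (by omega),
    cumulativeMass_atom hρ hρ₀ hL hL₀ hxbar1 hxbar (i + 1) (by omega) (by omega)]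
  push_cast
  ring

end CumulativeMass

namespace FollowTheLeader

variable (v v' : ℝ → ℝ) (vmax l : ℝ) (N : ℕ) (x : ℕ → ℝ → ℝ)

noncomputable def density (i : ℕ) (t : ℝ) : ℝ := l / (x (i + 1) t - x i t)

noncomputable def velocity (i : ℕ) (t : ℝ) : ℝ := if i = N then vmax else v (density l x i t)

/-- `d/dt v(Rᵢ) = v'(Rᵢ) Ṙᵢ` with `Ṙᵢ = -Rᵢ (ẋᵢ₊₁ - ẋᵢ) / (xᵢ₊₁ - xᵢ)`. -/
noncomputable def acceleration (i : ℕ) (t : ℝ) : ℝ :=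
  if i = N then 0 else
    -(density l x i t * v' (density l x i t)) *
      (velocity v vmax l N x (i + 1) t - velocity v vmax l N x i t) / (x (i + 1) t - x i t)

def IsSolution : Prop :=
  ∀ i, 1 ≤ i → i ≤ N → ∀ t, 0 ≤ t → HasDerivWithinAt (x i) (velocity v vmax l N x i t) (Ici 0) t

variable {v v' vmax l N x}

local notation "V" => velocity v vmax l N x
local notation "A" => acceleration v v' vmax l N x

theorem velocity_of_ne {i : ℕ} (hi : i ≠ N) (t : ℝ) : V i t = v (density l x i t) := if_neg hi

theorem velocity_self (t : ℝ) : V N t = vmax := if_pos rfl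

theorem IsSolution.hasDerivWithinAt_gap (hx : IsSolution v vmax l N x) {i : ℕ} (hi : 1 ≤ i)
    (hiN : i < N) {t : ℝ} (ht : 0 ≤ t) :
    HasDerivWithinAt (fun s => x (i + 1) s - x i s) (V (i + 1) t - V i t) (Ici 0) t :=
  (hx (i + 1) (by omega) hiN t ht).sub (hx i hi hiN.le t ht)

variable {ρmax : ℝ}

theorem velocity_nonneg (hvmax : 0 ≤ vmax) (hv : ∀ r ∈ Icc 0 ρmax, 0 ≤ v r) (hl : 0 < l)
    (hρ : 0 < ρmax) {j : ℕ} {t : ℝ} (hj : j = N ∨ l / ρmax ≤ x (j + 1) t - x j t) :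
    0 ≤ V j t := by
  rcases eq_or_ne j N with rfl | hjN
  · rwa [velocity_self]
  · rw [velocity_of_ne hjN]
    exact hv _ (Ioc_subset_Icc_self (div_mem_Ioc_of_div_le hl hρ (hj.resolve_left hjN)))

theorem IsSolution.div_le_gap_of_succ (hx : IsSolution v vmax l N x) (hvmax : 0 ≤ vmax)
    (hv : ∀ r ∈ Icc 0 ρmax, 0 ≤ v r) {u : ℝ} (hρu : ρmax < u) (hvu : ∀ r ∈ Ioo ρmax u, v r ≤ 0)
    (hl : 0 < l) (hρ : 0 < ρmax) {i : ℕ} (hi : 1 ≤ i) (hiN : i < N)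
    (h0 : l / ρmax ≤ x (i + 1) 0 - x i 0)
    (hnext : i + 1 = N ∨ ∀ t, 0 ≤ t → l / ρmax ≤ x (i + 1 + 1) t - x (i + 1) t) :
    ∀ t, 0 ≤ t → l / ρmax ≤ x (i + 1) t - x i t := by
  refine le_of_deriv_nonneg_of_mem_Ioo (fun t ht => hx.hasDerivWithinAt_gap hi hiN ht) h0
    (div_lt_div_of_pos_left hl hρ hρu) fun t ht hband => ?_
  -- a gap slightly below `l / ρmax` means a density slightly above `ρmax`, where `v ≤ 0`
  have hz : 0 < x (i + 1) t - x i t := (div_pos hl (hρ.trans hρu)).trans hband.1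
  have hR : density l x i t ∈ Ioo ρmax u :=
    ⟨(lt_div_iff₀ hz).2 ((lt_div_iff₀' hρ).1 hband.2),
      (div_lt_iff₀ hz).2 ((div_lt_iff₀' (hρ.trans hρu)).1 hband.1)⟩
  have hnext_nonneg : 0 ≤ V (i + 1) t :=
    velocity_nonneg hvmax hv hl hρ (hnext.imp_right fun h => h t ht.le)
  rw [velocity_of_ne hiN.ne]
  linarith [hvu _ hR]

theorem IsSolution.div_le_gap (hx : IsSolution v vmax l N x) (hvmax : 0 ≤ vmax)
    (hv : ∀ r ∈ Icc 0 ρmax, 0 ≤ v r) (hv_right : ∀ᶠ r in 𝓝[>] ρmax, v r ≤ 0)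
    (hl : 0 < l) (hρ : 0 < ρmax) (h0 : ∀ i, 1 ≤ i → i < N → l / ρmax ≤ x (i + 1) 0 - x i 0) :
    ∀ i, 1 ≤ i → i < N → ∀ t, 0 ≤ t → l / ρmax ≤ x (i + 1) t - x i t := by
  obtain ⟨u, hρu, hvu⟩ := mem_nhdsGT_iff_exists_Ioo_subset.1 hv_right
  exact Nat.forall_of_downward_step fun i hi hiN hnext =>
    hx.div_le_gap_of_succ hvmax hv hρu hvu hl hρ hi hiN (h0 i hi hiN) hnext

theorem IsSolution.hasDerivWithinAt_velocity (hx : IsSolution v vmax l N x)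
    (hv' : ∀ r ∈ Icc 0 ρmax, HasDerivAt v (v' r) r) (hl : 0 < l) (hρ : 0 < ρmax)
    (hgap : ∀ i, 1 ≤ i → i < N → ∀ t, 0 ≤ t → l / ρmax ≤ x (i + 1) t - x i t)
    {i : ℕ} (hi : 1 ≤ i) (hiN : i ≤ N) {t : ℝ} (ht : 0 ≤ t) :
    HasDerivWithinAt (V i) (A i t) (Ici 0) t := by
  rcases hiN.eq_or_lt with hiN | hiN
  · have hconst : V i = fun _ => vmax := funext fun s => hiN ▸ velocity_self s
    rw [hconst, acceleration, if_pos hiN]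
    exact hasDerivWithinAt_const t _ vmax
  have hz := hgap i hi hiN t ht
  have hz₀ : 0 < x (i + 1) t - x i t := (div_pos hl hρ).trans_le hz
  have hR : HasDerivWithinAt (density l x i)
      ((0 * (x (i + 1) t - x i t) - l * (V (i + 1) t - V i t)) / (x (i + 1) t - x i t) ^ 2)
      (Ici 0) t :=
    (hasDerivWithinAt_const t _ l).div (hx.hasDerivWithinAt_gap hi hiN ht) hz₀.ne'
  have hvR :=
    (hv' _ (Ioc_subset_Icc_self (div_mem_Ioc_of_div_le hl hρ hz))).comp_hasDerivWithinAt t hR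
  rw [show V i = v ∘ density l x i from funext (velocity_of_ne hiN.ne), acceleration,
    if_neg hiN.ne]
  refine hvR.congr_deriv ?_
  unfold density
  field_simp
  ring

theorem mul_acceleration_of_ne {i : ℕ} (hiN : i ≠ N) (t : ℝ) :
    t * A i t = -(density l x i t * v' (density l x i t)) * (t * (V (i + 1) t - V i t)) /
      (x (i + 1) t - x i t) := by
  rw [acceleration, if_neg hiN]
  ring

theorem mul_acceleration_succ_lt_of_touch (hv'_neg : ∀ r ∈ Icc 0 ρmax, v' r < 0)
    (hv_anti : AntitoneOn v (Icc 0 ρmax)) (hg : AntitoneOn (fun r => r * v' r) (Icc 0 ρmax))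
    (hl : 0 < l) (hρ : 0 < ρmax)
    (hgap : ∀ i, 1 ≤ i → i < N → ∀ t, 0 ≤ t → l / ρmax ≤ x (i + 1) t - x i t)
    {i : ℕ} (hi : 1 ≤ i) (hiN : i < N) {t : ℝ} (ht : 0 < t)
    (htouch : t * (V (i + 1) t - V i t) = x (i + 1) t - x i t)
    (hnext : i + 1 = N ∨ t * (V (i + 1 + 1) t - V (i + 1) t) < x (i + 1 + 1) t - x (i + 1) t) :
    t * A (i + 1) t < -(density l x i t * v' (density l x i t)) := by
  have hRi : density l x i t ∈ Ioc 0 ρmax := div_mem_Ioc_of_div_le hl hρ (hgap i hi hiN t ht.le)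
  have hgi : density l x i t * v' (density l x i t) < 0 :=
    mul_neg_of_pos_of_neg hRi.1 (hv'_neg _ (Ioc_subset_Icc_self hRi))
  rcases eq_or_ne (i + 1) N with hN | hN
  · rw [acceleration, if_pos hN, mul_zero]
    linarith
  have hz' := hgap (i + 1) (by omega) (by omega) t ht.le
  have hRi' : density l x (i + 1) t ∈ Ioc 0 ρmax := div_mem_Ioc_of_div_le hl hρ hz'
  have hz'₀ : 0 < x (i + 1 + 1) t - x (i + 1) t := (div_pos hl hρ).trans_le hz'
  have hgi' : density l x (i + 1) t * v' (density l x (i + 1) t) < 0 :=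
    mul_neg_of_pos_of_neg hRi'.1 (hv'_neg _ (Ioc_subset_Icc_self hRi'))
  -- at a touching time particle `i` is slower than particle `i + 1`, so its density is larger
  have hRR : density l x (i + 1) t ≤ density l x i t := by
    by_contra! h
    have hd : 0 < V (i + 1) t - V i t :=
      pos_of_mul_pos_right (htouch ▸ (div_pos hl hρ).trans_le (hgap i hi hiN t ht.le)) ht.le
    rw [velocity_of_ne hiN.ne, velocity_of_ne hN] at hd
    linarith [hv_anti (Ioc_subset_Icc_self hRi) (Ioc_subset_Icc_self hRi') h.le]
  calc t * A (i + 1) t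
      = -(density l x (i + 1) t * v' (density l x (i + 1) t)) *
          (t * (V (i + 1 + 1) t - V (i + 1) t)) / (x (i + 1 + 1) t - x (i + 1) t) :=
        mul_acceleration_of_ne hN t
    _ < -(density l x (i + 1) t * v' (density l x (i + 1) t)) *
          (x (i + 1 + 1) t - x (i + 1) t) / (x (i + 1 + 1) t - x (i + 1) t) := by
        gcongr
        · linarith
        · exact hnext.resolve_left hN
    _ = -(density l x (i + 1) t * v' (density l x (i + 1) t)) :=
        mul_div_cancel_right₀ _ hz'₀.ne'
    _ ≤ -(density l x i t * v' (density l x i t)) :=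
        neg_le_neg (hg (Ioc_subset_Icc_self hRi') (Ioc_subset_Icc_self hRi) hRR)

theorem IsSolution.mul_velocity_sub_lt_gap_of_succ (hx : IsSolution v vmax l N x)
    (hv' : ∀ r ∈ Icc 0 ρmax, HasDerivAt v (v' r) r) (hv'_neg : ∀ r ∈ Icc 0 ρmax, v' r < 0)
    (hv_anti : AntitoneOn v (Icc 0 ρmax)) (hg : AntitoneOn (fun r => r * v' r) (Icc 0 ρmax))
    (hl : 0 < l) (hρ : 0 < ρmax)
    (hgap : ∀ i, 1 ≤ i → i < N → ∀ t, 0 ≤ t → l / ρmax ≤ x (i + 1) t - x i t)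
    {i : ℕ} (hi : 1 ≤ i) (hiN : i < N)
    (hnext : i + 1 = N ∨ ∀ t, 0 ≤ t →
      t * (V (i + 1 + 1) t - V (i + 1) t) < x (i + 1 + 1) t - x (i + 1) t) :
    ∀ t, 0 ≤ t → t * (V (i + 1) t - V i t) < x (i + 1) t - x i t := by
  have hz : ∀ t, 0 ≤ t → 0 < x (i + 1) t - x i t :=
    fun t ht => (div_pos hl hρ).trans_le (hgap i hi hiN t ht)
  have hf : ∀ t, 0 ≤ t → HasDerivWithinAt
      (fun s => s * (V (i + 1) s - V i s) - (x (i + 1) s - x i s))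
      (t * (A (i + 1) t - A i t)) (Ici 0) t := fun t ht =>
    (((hasDerivWithinAt_id t _).mul
      ((hx.hasDerivWithinAt_velocity hv' hl hρ hgap (by omega) hiN ht).sub
        (hx.hasDerivWithinAt_velocity hv' hl hρ hgap hi hiN.le ht))).sub
      (hx.hasDerivWithinAt_gap hi hiN ht)).congr_deriv (by simp only [id, Pi.sub_apply]; ring)
  refine fun t ht => sub_neg.1 (neg_of_deriv_neg_of_eq_zero hf (by simpa using hz 0 le_rfl)
    (fun t ht htouch => ?_) t ht)
  have htouch : t * (V (i + 1) t - V i t) = x (i + 1) t - x i t := sub_eq_zero.1 htouch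
  have hAi : t * A i t = -(density l x i t * v' (density l x i t)) := by
    rw [mul_acceleration_of_ne hiN.ne, htouch, mul_div_assoc, div_self (hz t ht.le).ne', mul_one]
  have hAi' := mul_acceleration_succ_lt_of_touch hv'_neg hv_anti hg hl hρ hgap hi hiN ht htouch
    (hnext.imp_right fun h => h t ht.le)
  linarith

theorem IsSolution.mul_velocity_sub_lt_gap (hx : IsSolution v vmax l N x)
    (hv' : ∀ r ∈ Icc 0 ρmax, HasDerivAt v (v' r) r) (hv'_neg : ∀ r ∈ Icc 0 ρmax, v' r < 0)
    (hg : AntitoneOn (fun r => r * v' r) (Icc 0 ρmax)) (hl : 0 < l) (hρ : 0 < ρmax)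
    (hgap : ∀ i, 1 ≤ i → i < N → ∀ t, 0 ≤ t → l / ρmax ≤ x (i + 1) t - x i t) :
    ∀ i, 1 ≤ i → i < N → ∀ t, 0 ≤ t → t * (V (i + 1) t - V i t) < x (i + 1) t - x i t := by
  have hv_anti := antitoneOn_of_hasDerivAt_nonpos (convex_Icc 0 ρmax) hv' fun r hr =>
    (hv'_neg r hr).le
  exact Nat.forall_of_downward_step fun _ hi hiN hnext =>
    hx.mul_velocity_sub_lt_gap_of_succ hv' hv'_neg hv_anti hg hl hρ hgap hi hiN hnext

theorem IsSolution.velocity_sub_le_div (hx : IsSolution v vmax l N x)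
    (hv' : ∀ r ∈ Icc 0 ρmax, HasDerivAt v (v' r) r) (hv'_neg : ∀ r ∈ Icc 0 ρmax, v' r < 0)
    (hg : AntitoneOn (fun r => r * v' r) (Icc 0 ρmax)) (hl : 0 < l) (hρ : 0 < ρmax)
    (hgap : ∀ i, 1 ≤ i → i < N → ∀ t, 0 ≤ t → l / ρmax ≤ x (i + 1) t - x i t)
    {i : ℕ} (hi : 1 ≤ i) (hiN : i < N) {t : ℝ} (ht : 0 < t) :
    V (i + 1) t - V i t ≤ (x (i + 1) t - x i t) / t := by
  rw [le_div_iff₀ ht, mul_comm]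
  exact (hx.mul_velocity_sub_lt_gap hv' hv'_neg hg hl hρ hgap i hi hiN t ht.le).le

end FollowTheLeader

theorem stmt3_general
    -- velocity hypothesis (V1)
    (ρmax vmax : ℝ) (hρmax : 0 < ρmax) (hvmaxpos : 0 < vmax)
    (v v' : ℝ → ℝ)
    (hv_deriv : ∀ r ∈ Set.Icc (0:ℝ) ρmax, HasDerivAt v (v' r) r)
    (hv'_neg : ∀ r ∈ Set.Icc (0:ℝ) ρmax, v' r < 0)
    (hv_range : ∀ r ∈ Set.Icc (0:ℝ) ρmax, v r ∈ Set.Icc (0:ℝ) vmax)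
    (hvρmax : v ρmax = 0)
    -- hypothesis (V2)
    (hV2 : AntitoneOn (fun r => r * v' r) (Set.Icc (0:ℝ) ρmax))
    -- initial datum (I1)
    (rbar : ℝ → ℝ) (hrbar_int : Integrable rbar)
    (hrbar_range : ∀ y, rbar y ∈ Set.Icc (0:ℝ) ρmax)
    (L : ℝ) (hL : L = ∫ y, rbar y) (hLpos : 0 < L)
    -- atomization of the initial datum
    (n : ℕ) (hn : 3 ≤ n)
    (xbar : ℕ → ℝ)
    (hxbar1 : xbar 1 = sSup {y : ℝ | (∫ s in Set.Iio y, rbar s) < L / n})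
    (hxbar : ∀ i, 2 ≤ i → i ≤ n - 1 →
        xbar i = sSup {y : ℝ | (∫ s in Set.Ioc (xbar (i-1)) y, rbar s) < L / n})
    -- the follow-the-leader system
    (x : ℕ → ℝ → ℝ)
    (hODE : ∀ i, 1 ≤ i → i ≤ n - 2 → ∀ t, 0 ≤ t →
        HasDerivWithinAt (x i) (v ((L / n) / (x (i+1) t - x i t))) (Set.Ici 0) t)
    (hlead : ∀ t, 0 ≤ t → HasDerivWithinAt (x (n-1)) vmax (Set.Ici 0) t)
    (hIC : ∀ i, 1 ≤ i → i ≤ n - 1 → x i 0 = xbar i) :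
    ∀ t, 0 < t →
      (∀ i, 1 ≤ i → i ≤ n - 3 →
        v ((L / n) / (x (i+2) t - x (i+1) t)) - v ((L / n) / (x (i+1) t - x i t))
          ≤ (x (i+1) t - x i t) / t) ∧
      (vmax - v ((L / n) / (x (n-1) t - x (n-2) t))
          ≤ (x (n-1) t - x (n-2) t) / t) := by
  have hl : 0 < L / n := by positivity
  have hgap₀ : ∀ i, 1 ≤ i → i < n - 1 → L / n / ρmax ≤ x (i + 1) 0 - x i 0 := fun i hi hin => by
    rw [hIC i hi (by omega), hIC (i + 1) (by omega) (by omega)]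
    exact div_le_sub_atom hrbar_int (fun y => (hrbar_range y).1) (fun y => (hrbar_range y).2)
      hρmax hL hLpos hxbar1 hxbar i hi hin
  have hx : FollowTheLeader.IsSolution v vmax (L / n) (n - 1) x := fun i hi hin t ht => by
    rcases hin.eq_or_lt with rfl | hin
    · rw [FollowTheLeader.velocity_self]
      exact hlead t ht
    · rw [FollowTheLeader.velocity_of_ne hin.ne]
      exact hODE i hi (by omega) t ht
  have hρmax_mem : ρmax ∈ Icc 0 ρmax := ⟨hρmax.le, le_rfl⟩
  have hgap := hx.div_le_gap hvmaxpos.le (fun r hr => (hv_range r hr).1)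
    (((hv_deriv ρmax hρmax_mem).eventually_nhdsGT_lt_of_neg (hv'_neg ρmax hρmax_mem)).mono
      fun r hr => (hr.trans_eq hvρmax).le) hl hρmax hgap₀
  intro t ht
  refine ⟨fun i hi hin => ?_, ?_⟩
  · have h := hx.velocity_sub_le_div hv_deriv hv'_neg hV2 hl hρmax hgap hi (by omega) ht
    rwa [FollowTheLeader.velocity_of_ne (by omega), FollowTheLeader.velocity_of_ne (by omega)] at h
  · have h := hx.velocity_sub_le_div hv_deriv hv'_neg hV2 hl hρmax hgap (i := n - 2) (by omega)
      (by omega) ht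
    rw [show n - 2 + 1 = n - 1 by omega, FollowTheLeader.velocity_self,
      FollowTheLeader.velocity_of_ne (by omega)] at h
    unfold FollowTheLeader.density at h
    rwa [show n - 2 + 1 = n - 1 by omega] at h

/-- **Discrete Oleinik-type inequality.**  If moreover `ρ ↦ ρ·v'(ρ)` is nonincreasing on
`[0,ρmax]`, then for all `t > 0` the follow-the-leader particles satisfy
`ẋᵢ₊₁(t) − ẋᵢ(t) ≤ (xᵢ₊₁(t) − xᵢ(t))/t`, i.e.
`v(Rᵢ₊₁(t)) − v(Rᵢ(t)) ≤ (xᵢ₊₁(t) − xᵢ(t))/t` for `i = 1,…,n−3` and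
`vmax − v(Rⁿ_{n−2}(t)) ≤ (x_{n−1}(t) − x_{n−2}(t))/t`. -/
theorem stmt3
    -- velocity hypothesis (V1)
    (ρmax vmax : ℝ) (hρmax : 0 < ρmax) (hvmaxpos : 0 < vmax)
    (v v' : ℝ → ℝ)
    (hv_deriv : ∀ r ∈ Set.Icc (0:ℝ) ρmax, HasDerivAt v (v' r) r)
    (hv'_cont : ContinuousOn v' (Set.Icc (0:ℝ) ρmax))
    (hv'_neg : ∀ r ∈ Set.Icc (0:ℝ) ρmax, v' r < 0)
    (hv_range : ∀ r ∈ Set.Icc (0:ℝ) ρmax, v r ∈ Set.Icc (0:ℝ) vmax)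
    (hv0 : v 0 = vmax) (hvρmax : v ρmax = 0)
    -- hypothesis (V2)
    (hV2 : AntitoneOn (fun r => r * v' r) (Set.Icc (0:ℝ) ρmax))
    -- initial datum (I1)
    (rbar : ℝ → ℝ) (hrbar_int : Integrable rbar)
    (hrbar_range : ∀ y, rbar y ∈ Set.Icc (0:ℝ) ρmax)
    (L R : ℝ) (hL : L = ∫ y, rbar y) (hLpos : 0 < L)
    (hR : eLpNorm rbar ⊤ volume = ENNReal.ofReal R) (hRpos : 0 < R)
    -- atomization of the initial datum
    (n : ℕ) (hn : 3 ≤ n)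
    (xbar : ℕ → ℝ)
    (hxbar1 : xbar 1 = sSup {y : ℝ | (∫ s in Set.Iio y, rbar s) < L / n})
    (hxbar : ∀ i, 2 ≤ i → i ≤ n - 1 →
        xbar i = sSup {y : ℝ | (∫ s in Set.Ioc (xbar (i-1)) y, rbar s) < L / n})
    -- the follow-the-leader system
    (x : ℕ → ℝ → ℝ)
    (hODE : ∀ i, 1 ≤ i → i ≤ n - 2 → ∀ t, 0 ≤ t →
        HasDerivWithinAt (x i) (v ((L / n) / (x (i+1) t - x i t))) (Set.Ici 0) t)
    (hlead : ∀ t, 0 ≤ t → HasDerivWithinAt (x (n-1)) vmax (Set.Ici 0) t)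
    (hIC : ∀ i, 1 ≤ i → i ≤ n - 1 → x i 0 = xbar i) :
    ∀ t, 0 < t →
      (∀ i, 1 ≤ i → i ≤ n - 3 →
        v ((L / n) / (x (i+2) t - x (i+1) t)) - v ((L / n) / (x (i+1) t - x i t))
          ≤ (x (i+1) t - x i t) / t) ∧
      (vmax - v ((L / n) / (x (n-1) t - x (n-2) t))
          ≤ (x (n-1) t - x (n-2) t) / t) :=
  stmt3_general ρmax vmax hρmax hvmaxpos v v' hv_deriv hv'_neg hv_range hvρmax hV2 rbar hrbar_int
    hrbar_range L hL hLpos n hn xbar hxbar1 hxbar x hODE hlead hIC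
end

section
/- Approximation of the initial datum by the follow-the-leader atomization: assume ρ̄ ∈ L¹∩L^∞(ℝ;[0,ρ_max]) has compact support and v satisfies the velocity hypothesis. Then, for every bounded Lipschitz-continuous function φ : ℝ → ℝ, the initial discrete density of the compact-support FTL scheme satisfies ∫_ℝ [ρ̄(x) − ρⁿ(0,x)] φ(x) dx → 0 as n → ∞. -/
open MeasureTheory Set Filter Topology
open scoped ENNReal NNReal

/-!
On each atom cell `(xᵢ, xᵢ₊₁]` both `ρ̄` and the uniform density `ρⁿ(0, ·)` carry the mass `L / n`,
so against a `K`-Lipschitz `φ` both integrals lie within `K (L / n) (xᵢ₊₁ - xᵢ)` of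
`(L / n) φ(xᵢ)`. Summing over the cells, the error is at most `2 K L |supp ρ̄| / n`.
The atoms exist because `y ↦ ∫_{(ξ, y]} ρ̄` is continuous and monotone.
-/

/-- The initial discrete density ρⁿ(0, ·) with atoms `xbar n i`. -/
noncomputable def initDens (L : ℝ) (xbar : ℕ → ℕ → ℝ) (n : ℕ) (y : ℝ) : ℝ :=
  ∑ i ∈ Finset.range n,
    Set.indicator (Set.Ico (xbar n i) (xbar n (i+1)))
      (fun _ => (L / n) / (xbar n (i+1) - xbar n i)) y

section Lipschitz

variable {α : Type*} [PseudoMetricSpace α] [MeasurableSpace α] [OpensMeasurableSpace α]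
  {μ : Measure α} {g φ : α → ℝ} {K : ℝ≥0} {x₀ : α} {δ : ℝ}

lemma abs_integral_mul_sub_mul_le (hg : Integrable g μ) (hg0 : ∀ᵐ y ∂μ, 0 ≤ g y)
    (hφ : LipschitzWith K φ) (hδ : ∀ᵐ y ∂μ, dist y x₀ ≤ δ) :
    |∫ y, g y * φ y ∂μ - (∫ y, g y ∂μ) * φ x₀| ≤ K * δ * ∫ y, g y ∂μ := by
  have hbound : ∀ᵐ y ∂μ, ‖g y * (φ y - φ x₀)‖ ≤ K * δ * g y := by
    filter_upwards [hg0, hδ] with y hy0 hyδ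
    rw [norm_mul, Real.norm_of_nonneg hy0, mul_comm, ← dist_eq_norm]
    exact mul_le_mul_of_nonneg_right ((hφ.dist_le_mul y x₀).trans (by gcongr)) hy0
  have hosc : Integrable (fun y => g y * (φ y - φ x₀)) μ :=
    (hg.const_mul _).mono' (hg.aestronglyMeasurable.mul
      (hφ.continuous.aestronglyMeasurable.sub aestronglyMeasurable_const)) hbound
  have hgφ : Integrable (fun y => g y * φ y) μ := by
    refine (hosc.add (hg.mul_const (φ x₀))).congr (ae_of_all _ fun y => ?_)
    simp only [Pi.add_apply]
    ring
  calc |∫ y, g y * φ y ∂μ - (∫ y, g y ∂μ) * φ x₀|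
      = ‖∫ y, g y * (φ y - φ x₀) ∂μ‖ := by
        rw [← integral_mul_const, ← integral_sub hgφ (hg.mul_const _), Real.norm_eq_abs]
        simp only [mul_sub]
    _ ≤ ∫ y, K * δ * g y ∂μ := norm_integral_le_of_norm_le (hg.const_mul _) hbound
    _ = K * δ * ∫ y, g y ∂μ := integral_const_mul _ _

end Lipschitz

lemma ae_compl_eq_zero_of_setIntegral_eq_integral {α : Type*} [MeasurableSpace α]
    {μ : Measure α} {f : α → ℝ} {s : Set α} (hf : Integrable f μ) (hf0 : 0 ≤ᵐ[μ] f)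
    (hs : MeasurableSet s) (h : ∫ x in s, f x ∂μ = ∫ x, f x ∂μ) :
    ∀ᵐ x ∂μ, x ∉ s → f x = 0 := by
  have hcompl : ∫ x in sᶜ, f x ∂μ = 0 := by
    linarith [integral_add_compl hs hf]
  have := (integral_eq_zero_iff_of_nonneg_ae (ae_restrict_of_ae hf0) hf.integrableOn).mp hcompl
  exact (ae_restrict_iff' hs.compl).mp this

lemma abs_setIntegral_Ioc_mul_sub_le {f φ : ℝ → ℝ} {K : ℝ≥0} {p q : ℝ} (hpq : p ≤ q)
    (hf : IntegrableOn f (Ioc p q)) (hf0 : ∀ y ∈ Ioc p q, 0 ≤ f y) (hφ : LipschitzWith K φ) :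
    |(∫ y in Ioc p q, f y * φ y) - ∫ y in Ioc p q, (∫ s in Ioc p q, f s) / (q - p) * φ y|
      ≤ 2 * K * (∫ s in Ioc p q, f s) * (q - p) := by
  set m := ∫ s in Ioc p q, f s
  have hδ : ∀ᵐ y ∂volume.restrict (Ioc p q), dist y p ≤ q - p :=
    ae_restrict_of_forall_mem measurableSet_Ioc fun y hy => by
      rw [Real.dist_eq, abs_of_pos (sub_pos.mpr hy.1)]; linarith [hy.2]
  have hconst : IntegrableOn (fun _ => m / (q - p)) (Ioc p q) := integrableOn_const (by simp)
  have hmass : ∫ _ in Ioc p q, m / (q - p) = m := by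
    rcases hpq.eq_or_lt with rfl | hlt
    · simp [m]
    · rw [setIntegral_const, measureReal_def, Real.volume_Ioc, ENNReal.toReal_ofReal (by linarith),
        smul_eq_mul, mul_div_cancel₀ _ (by linarith)]
  have hf_osc : |(∫ y in Ioc p q, f y * φ y) - m * φ p| ≤ K * (q - p) * m :=
    abs_integral_mul_sub_mul_le hf (ae_restrict_of_forall_mem measurableSet_Ioc hf0) hφ hδ
  have hc_osc := abs_integral_mul_sub_mul_le hconst
    (ae_of_all _ fun _ => div_nonneg (setIntegral_nonneg measurableSet_Ioc hf0) (by linarith))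
    hφ hδ
  rw [hmass] at hc_osc
  rw [abs_le] at hf_osc hc_osc ⊢
  constructor <;> linarith [hf_osc.1, hf_osc.2, hc_osc.1, hc_osc.2]

lemma setIntegral_Ioc_eq_sum_integral_Ioc {g : ℝ → ℝ} {x : ℕ → ℝ} {n : ℕ}
    (hx : ∀ i < n, x i ≤ x (i + 1)) (hg : Integrable g) :
    ∫ y in Ioc (x 0) (x n), g y = ∑ i ∈ Finset.range n, ∫ y in Ioc (x i) (x (i + 1)), g y := by
  have hx0n : x 0 ≤ x n := by
    rw [← sub_nonneg, ← Finset.sum_range_sub]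
    exact Finset.sum_nonneg fun i hi => sub_nonneg.mpr (hx i (Finset.mem_range.mp hi))
  rw [← intervalIntegral.integral_of_le hx0n,
    ← intervalIntegral.sum_integral_adjacent_intervals fun _ _ => hg.intervalIntegrable]
  exact Finset.sum_congr rfl fun i hi =>
    intervalIntegral.integral_of_le (hx i (Finset.mem_range.mp hi))

lemma integrable_indicator_Ico_const_mul {φ : ℝ → ℝ} (hφ : Continuous φ) (p q c : ℝ) :
    Integrable ((Ico p q).indicator fun y => c * φ y) :=
  ((continuous_const.mul hφ).integrableOn_Icc.mono_set Ico_subset_Icc_self).integrable_indicator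
    measurableSet_Ico

section initDens

variable {L : ℝ} {xbar : ℕ → ℕ → ℝ} {n : ℕ} {φ : ℝ → ℝ}

lemma initDens_mul_eq_sum_indicator (y : ℝ) :
    initDens L xbar n y * φ y = ∑ i ∈ Finset.range n,
      (Ico (xbar n i) (xbar n (i+1))).indicator
        (fun y => (L / n) / (xbar n (i+1) - xbar n i) * φ y) y := by
  simp only [initDens, Finset.sum_mul, indicator_mul_left]

lemma integrable_initDens_mul (hφ : Continuous φ) :
    Integrable fun y => initDens L xbar n y * φ y := by
  simp only [initDens_mul_eq_sum_indicator]
  exact integrable_finsetSum _ fun i _ => integrable_indicator_Ico_const_mul hφ _ _ _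

lemma integral_initDens_mul (hφ : Continuous φ) :
    ∫ y, initDens L xbar n y * φ y = ∑ i ∈ Finset.range n,
      ∫ y in Ioc (xbar n i) (xbar n (i+1)), (L / n) / (xbar n (i+1) - xbar n i) * φ y := by
  simp only [initDens_mul_eq_sum_indicator]
  rw [integral_finsetSum _ fun i _ => integrable_indicator_Ico_const_mul hφ _ _ _]
  exact Finset.sum_congr rfl fun i _ => by
    rw [integral_indicator measurableSet_Ico, integral_Ico_eq_integral_Ioo,
      integral_Ioc_eq_integral_Ioo]

theorem abs_integral_sub_initDens_mul_le {f : ℝ → ℝ} {K : ℝ≥0} (hf : Integrable f)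
    (hf0 : ∀ y, 0 ≤ f y) (hL : L = ∫ y, f y) (hn : n ≠ 0)
    (hmono : ∀ i < n, xbar n i ≤ xbar n (i + 1))
    (hcell : ∀ i < n, ∫ y in Ioc (xbar n i) (xbar n (i + 1)), f y = L / n)
    (hφ : LipschitzWith K φ) :
    |∫ y, (f y - initDens L xbar n y) * φ y| ≤ 2 * K * (L / n) * (xbar n n - xbar n 0) := by
  set x := xbar n
  have hmass : ∫ y in Ioc (x 0) (x n), f y = ∫ y, f y := by
    rw [setIntegral_Ioc_eq_sum_integral_Ioc hmono hf, Finset.sum_congr rfl fun i hi =>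
      hcell i (Finset.mem_range.mp hi), Finset.sum_const, Finset.card_range, nsmul_eq_mul,
      mul_div_cancel₀ _ (Nat.cast_ne_zero.mpr hn), hL]
  have hzero := ae_compl_eq_zero_of_setIntegral_eq_integral hf (ae_of_all _ hf0)
    measurableSet_Ioc hmass
  have hfφ : Integrable fun y => f y * φ y :=
    (hf.integrableOn.mul_continuousOn hφ.continuous.continuousOn
      isCompact_Icc).integrable_of_ae_notMem_eq_zero <| by
        filter_upwards [hzero] with y hy hy'
        rw [hy fun h => hy' (Ioc_subset_Icc_self h), zero_mul]
  have hfφ_cells :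
      ∫ y, f y * φ y = ∑ i ∈ Finset.range n, ∫ y in Ioc (x i) (x (i + 1)), f y * φ y := by
    rw [← setIntegral_Ioc_eq_sum_integral_Ioc hmono hfφ]
    refine (setIntegral_eq_integral_of_ae_compl_eq_zero ?_).symm
    filter_upwards [hzero] with y hy hy'
    rw [hy hy', zero_mul]
  calc |∫ y, (f y - initDens L xbar n y) * φ y|
      = |∑ i ∈ Finset.range n, ((∫ y in Ioc (x i) (x (i + 1)), f y * φ y) -
          ∫ y in Ioc (x i) (x (i + 1)), (L / n) / (x (i + 1) - x i) * φ y)| := by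
        simp only [sub_mul]
        rw [integral_sub hfφ (integrable_initDens_mul hφ.continuous),
          integral_initDens_mul hφ.continuous, hfφ_cells, Finset.sum_sub_distrib]
    _ ≤ ∑ i ∈ Finset.range n, 2 * K * (L / n) * (x (i + 1) - x i) := by
        refine (Finset.abs_sum_le_sum_abs _ _).trans (Finset.sum_le_sum fun i hi => ?_)
        have hi := Finset.mem_range.mp hi
        simpa only [hcell i hi] using
          abs_setIntegral_Ioc_mul_sub_le (hmono i hi) hf.integrableOn (fun y _ => hf0 y) hφ
    _ = 2 * K * (L / n) * (x n - x 0) := by rw [← Finset.mul_sum, Finset.sum_range_sub]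

end initDens

section Atomization

variable {f : ℝ → ℝ}

lemma setIntegral_Ioc_add (hf : Integrable f) {p q r : ℝ} (hpq : p ≤ q) (hqr : q ≤ r) :
    ∫ s in Ioc p r, f s = (∫ s in Ioc p q, f s) + ∫ s in Ioc q r, f s := by
  rw [← intervalIntegral.integral_of_le (hpq.trans hqr), ← intervalIntegral.integral_of_le hpq,
    ← intervalIntegral.integral_of_le hqr,
    intervalIntegral.integral_add_adjacent_intervals hf.intervalIntegrable hf.intervalIntegrable]

lemma monotone_setIntegral_Ioc (hf : Integrable f) (hf0 : ∀ y, 0 ≤ f y) (ξ : ℝ) :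
    Monotone fun y => ∫ s in Ioc ξ y, f s := fun _ _ h =>
  setIntegral_mono_set hf.integrableOn (ae_of_all _ hf0) (Ioc_subset_Ioc_right h).eventuallyLE

lemma continuous_setIntegral_Ioc (hf : Integrable f) (ξ : ℝ) :
    Continuous fun y => ∫ s in Ioc ξ y, f s := by
  have h : (fun y => ∫ s in Ioc ξ y, f s) = fun y => ∫ s in ξ..max ξ y, f s := by
    funext y
    rcases le_total ξ y with h | h
    · rw [max_eq_right h, intervalIntegral.integral_of_le h]
    · rw [max_eq_left h, intervalIntegral.integral_same, Ioc_eq_empty (not_lt.mpr h),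
        Measure.restrict_empty, integral_zero_measure]
  rw [h]
  exact (hf.continuous_primitive ξ).comp (continuous_const.max continuous_id)

lemma sSup_setIntegral_Ioc_lt_spec (hf : Integrable f) (hf0 : ∀ y, 0 ≤ f y) {ξ B m : ℝ}
    (hm : 0 < m) (hB : m ≤ ∫ s in Ioc ξ B, f s) :
    ξ ≤ sSup {y | ∫ s in Ioc ξ y, f s < m} ∧ sSup {y | ∫ s in Ioc ξ y, f s < m} ≤ B ∧
      ∫ s in Ioc ξ (sSup {y | ∫ s in Ioc ξ y, f s < m}), f s = m := by
  set H : ℝ → ℝ := fun y => ∫ s in Ioc ξ y, f s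
  set S : Set ℝ := {y | H y < m}
  have hmono : Monotone H := monotone_setIntegral_Ioc hf hf0 ξ
  have hcont : Continuous H := continuous_setIntegral_Ioc hf ξ
  have hξS : ξ ∈ S := by simpa [S, H] using hm
  have hSB : ∀ y ∈ S, y ≤ B := fun y hy =>
    not_lt.mp fun hBy => (hB.trans (hmono hBy.le)).not_gt hy
  have hbdd : BddAbove S := ⟨B, hSB⟩
  have hsup_le : H (sSup S) ≤ m :=
    closure_minimal (fun _ hy => le_of_lt hy) (isClosed_le hcont continuous_const)
      (csSup_mem_closure ⟨ξ, hξS⟩ hbdd)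
  have hle_sup : m ≤ H (sSup S) := by
    refine ge_of_tendsto (hcont.continuousWithinAt (s := Ioi (sSup S)) (x := sSup S)) ?_
    filter_upwards [self_mem_nhdsWithin] with y hy
    exact not_lt.mp fun hyS => (le_csSup hbdd hyS).not_gt hy
  exact ⟨le_csSup hbdd hξS, csSup_le ⟨ξ, hξS⟩ hSB, le_antisymm hsup_le hle_sup⟩

lemma atom_succ_spec (hf : Integrable f) (hf0 : ∀ y, 0 ≤ f y) {a b L : ℝ}
    (hL : ∫ s in Ioc a b, f s = L) (hLpos : 0 < L) {n : ℕ} {x : ℕ → ℝ}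
    (hx : ∀ i, 1 ≤ i → i ≤ n → x i = sSup {y | ∫ s in Ioc (x (i - 1)) y, f s < L / n})
    {j : ℕ} (hj : j < n) (hax : a ≤ x j) (hxb : x j ≤ b)
    (hmass : ∫ s in Ioc a (x j), f s = j * (L / n)) :
    x j ≤ x (j + 1) ∧ x (j + 1) ≤ b ∧ ∫ s in Ioc (x j) (x (j + 1)), f s = L / n := by
  have hn : (0 : ℝ) < n := by exact_mod_cast (Nat.zero_lt_of_lt hj)
  have htail : L / n ≤ ∫ s in Ioc (x j) b, f s := by
    have hsplit := setIntegral_Ioc_add hf hax hxb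
    have hj' : (j : ℝ) + 1 ≤ n := by exact_mod_cast hj
    have : (j + 1) * (L / n) ≤ L := by
      calc (j + 1) * (L / n) ≤ n * (L / n) := by gcongr
        _ = L := mul_div_cancel₀ _ hn.ne'
    linarith
  simpa only [hx (j + 1) (by omega) hj, Nat.add_sub_cancel] using
    sSup_setIntegral_Ioc_lt_spec hf hf0 (div_pos hLpos hn) htail

lemma atom_mem_and_mass (hf : Integrable f) (hf0 : ∀ y, 0 ≤ f y) {a b L : ℝ}
    (hL : ∫ s in Ioc a b, f s = L) (hLpos : 0 < L) {n : ℕ} {x : ℕ → ℝ} (hx0 : x 0 = a)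
    (hx : ∀ i, 1 ≤ i → i ≤ n → x i = sSup {y | ∫ s in Ioc (x (i - 1)) y, f s < L / n})
    {i : ℕ} (hi : i ≤ n) :
    a ≤ x i ∧ x i ≤ b ∧ ∫ s in Ioc a (x i), f s = i * (L / n) := by
  induction i with
  | zero =>
    have hab : a ≤ b := not_lt.mp fun hba => hLpos.ne' (by simp [← hL, Ioc_eq_empty_of_le hba.le])
    simp [hx0, hab]
  | succ j ih =>
    obtain ⟨hax, hxb, hmass⟩ := ih (by omega)
    obtain ⟨hle, hxb', hcell⟩ := atom_succ_spec hf hf0 hL hLpos hx (by omega) hax hxb hmass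
    refine ⟨hax.trans hle, hxb', ?_⟩
    rw [setIntegral_Ioc_add hf hax hle, hmass, hcell]
    push_cast
    ring

lemma atom_cell_spec (hf : Integrable f) (hf0 : ∀ y, 0 ≤ f y) {a b L : ℝ}
    (hL : ∫ s in Ioc a b, f s = L) (hLpos : 0 < L) {n : ℕ} {x : ℕ → ℝ} (hx0 : x 0 = a)
    (hx : ∀ i, 1 ≤ i → i ≤ n → x i = sSup {y | ∫ s in Ioc (x (i - 1)) y, f s < L / n})
    {j : ℕ} (hj : j < n) :
    x j ≤ x (j + 1) ∧ ∫ s in Ioc (x j) (x (j + 1)), f s = L / n := by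
  obtain ⟨hax, hxb, hmass⟩ := atom_mem_and_mass hf hf0 hL hLpos hx0 hx hj.le
  obtain ⟨hle, -, hcell⟩ := atom_succ_spec hf hf0 hL hLpos hx hj hax hxb hmass
  exact ⟨hle, hcell⟩

end Atomization

lemma setIntegral_Ioc_sInf_sSup_tsupport {f : ℝ → ℝ} (hsupp : HasCompactSupport f) :
    ∫ s in Ioc (sInf (tsupport f)) (sSup (tsupport f)), f s = ∫ y, f y := by
  rw [← integral_Icc_eq_integral_Ioc]
  exact setIntegral_eq_integral_of_forall_compl_eq_zero fun y hy =>
    image_eq_zero_of_notMem_tsupport fun h => hy (hsupp.isBounded.subset_Icc_sInf_sSup h)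

theorem stmt7_general
    (ρmax : ℝ)
    -- initial datum (I1), compactly supported
    (rbar : ℝ → ℝ) (hrbar_int : Integrable rbar)
    (hrbar_range : ∀ y, rbar y ∈ Set.Icc (0:ℝ) ρmax)
    (hrbar_supp : HasCompactSupport rbar)
    (L : ℝ) (hL : L = ∫ y, rbar y) (hLpos : 0 < L)
    -- atomization of the initial datum, for every n ≥ 1
    (xbar : ℕ → ℕ → ℝ)
    (hxbar0 : ∀ n, 1 ≤ n → xbar n 0 = sInf (tsupport rbar))
    (hxbar : ∀ n, 1 ≤ n → ∀ i, 1 ≤ i → i ≤ n →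
        xbar n i = sSup {y : ℝ | (∫ s in Set.Ioc (xbar n (i-1)) y, rbar s) < L / n})
    -- bounded Lipschitz test function
    (φ : ℝ → ℝ) (K : ℝ≥0) (hφ_lip : LipschitzWith K φ) :
    Tendsto (fun n : ℕ => ∫ y, (rbar y - initDens L xbar n y) * φ y)
      atTop (nhds 0) := by
  have hf0 : ∀ y, 0 ≤ rbar y := fun y => (hrbar_range y).1
  set a := sInf (tsupport rbar)
  set b := sSup (tsupport rbar)
  have hab_mass : ∫ s in Ioc a b, rbar s = L := by
    rw [setIntegral_Ioc_sInf_sSup_tsupport hrbar_supp, hL]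
  refine squeeze_zero_norm' ?_ (tendsto_const_div_atTop_nhds_zero_nat (2 * K * L * (b - a)))
  filter_upwards [eventually_ge_atTop 1] with n hn
  have hcell j (hj : j < n) := atom_cell_spec hrbar_int hf0 hab_mass hLpos (hxbar0 n hn)
    (hxbar n hn) hj
  obtain ⟨-, hxb, -⟩ := atom_mem_and_mass hrbar_int hf0 hab_mass hLpos (hxbar0 n hn)
    (hxbar n hn) le_rfl
  calc _ ≤ 2 * K * (L / n) * (xbar n n - xbar n 0) :=
        abs_integral_sub_initDens_mul_le hrbar_int hf0 hL (by omega) (fun j hj => (hcell j hj).1)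
          (fun j hj => (hcell j hj).2) hφ_lip
    _ ≤ 2 * K * (L / n) * (b - a) := by rw [hxbar0 n hn]; gcongr
    _ = 2 * K * L * (b - a) / n := by ring

/-- **Approximation of the initial datum by the follow-the-leader atomization.**
For every bounded Lipschitz `φ : ℝ → ℝ` one has
`∫ (ρ̄(x) − ρⁿ(0,x)) φ(x) dx → 0` as `n → ∞`. -/
theorem stmt7
    -- velocity hypothesis (V1)
    (ρmax vmax : ℝ) (hρmax : 0 < ρmax) (hvmaxpos : 0 < vmax)
    (v v' : ℝ → ℝ)
    (hv_deriv : ∀ r ∈ Set.Icc (0:ℝ) ρmax, HasDerivAt v (v' r) r)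
    (hv'_cont : ContinuousOn v' (Set.Icc (0:ℝ) ρmax))
    (hv'_neg : ∀ r ∈ Set.Icc (0:ℝ) ρmax, v' r < 0)
    (hv_range : ∀ r ∈ Set.Icc (0:ℝ) ρmax, v r ∈ Set.Icc (0:ℝ) vmax)
    (hv0 : v 0 = vmax) (hvρmax : v ρmax = 0)
    -- initial datum (I1), compactly supported
    (rbar : ℝ → ℝ) (hrbar_int : Integrable rbar)
    (hrbar_range : ∀ y, rbar y ∈ Set.Icc (0:ℝ) ρmax)
    (hrbar_supp : HasCompactSupport rbar)
    (L R : ℝ) (hL : L = ∫ y, rbar y) (hLpos : 0 < L)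
    (hR : eLpNorm rbar ⊤ volume = ENNReal.ofReal R) (hRpos : 0 < R)
    -- atomization of the initial datum, for every n ≥ 1
    (xbar : ℕ → ℕ → ℝ)
    (hxbar0 : ∀ n, 1 ≤ n → xbar n 0 = sInf (tsupport rbar))
    (hxbar : ∀ n, 1 ≤ n → ∀ i, 1 ≤ i → i ≤ n →
        xbar n i = sSup {y : ℝ | (∫ s in Set.Ioc (xbar n (i-1)) y, rbar s) < L / n})
    -- bounded Lipschitz test function
    (φ : ℝ → ℝ) (K : ℝ≥0) (hφ_lip : LipschitzWith K φ)
    (Mφ : ℝ) (hφ_bdd : ∀ y, |φ y| ≤ Mφ) :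
    Tendsto (fun n : ℕ => ∫ y, (rbar y - initDens L xbar n y) * φ y)
      atTop (nhds 0) :=
  stmt7_general ρmax rbar hrbar_int hrbar_range hrbar_supp L hL hLpos xbar hxbar0 hxbar φ K hφ_lip
end

section
/- Discrete maximum–minimum principle for the follow-the-leader scheme with boundary data: let v satisfy the velocity hypothesis, let 0 < δ ≤ R ≤ ρ_max, ℓ > 0, ρ̂ ∈ [δ,R], and let y₀ < y₁ < … < y_M solve ẏᵢ(t) = v(ℓ/(yᵢ₊₁(t) − yᵢ(t))) for i = 0,…,M−1 and ẏ_M(t) = v(ρ̂), with initial gaps satisfying ℓ/R ≤ yᵢ₊₁(0) − yᵢ(0) ≤ ℓ/δ for all i. Then ℓ/R ≤ yᵢ₊₁(t) − yᵢ(t) ≤ ℓ/δ for all t ≥ 0 and all i ∈ {0,…,M−1}. -/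
/-!
Each gap `g = yᵢ₊₁ - yᵢ` solves `g' = w - v(ℓ/g)`, where `w` is the speed of particle `i+1`.
Since `x ↦ v(ℓ/x)` has positive derivative at `ℓ/δ` and `ℓ/R`, the field `g'` points strictly
into `[ℓ/R, ℓ/δ]` just outside it whenever `w ∈ [v R, v δ]`, so the interval is invariant.
The leader moves with speed `v ρ̂ ∈ [v R, v δ]`, and an interior particle `i+1` moves with
`v(ℓ/gᵢ₊₁) ∈ [v R, v δ]` once the gap ahead of it is known to stay in the interval, so the
claim follows by downward induction on `i`.
-/

open Set Filter Topology

theorem HasDerivAt.eventually_nhdsGT_lt {f : ℝ → ℝ} {f' x : ℝ} (hf : HasDerivAt f f' x)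
    (hf' : 0 < f') : ∀ᶠ y in 𝓝[>] x, f x < f y := by
  have hslope : ∀ᶠ y in 𝓝[>] x, 0 < slope f x y :=
    (hf.tendsto_slope.mono_left (nhdsGT_le_nhdsNE x)).eventually (lt_mem_nhds hf')
  filter_upwards [hslope, self_mem_nhdsWithin] with y hy (hxy : x < y)
  rw [slope_def_field, div_pos_iff_of_pos_right (sub_pos.2 hxy)] at hy
  exact sub_pos.1 hy

theorem HasDerivAt.eventually_nhdsLT_lt {f : ℝ → ℝ} {f' x : ℝ} (hf : HasDerivAt f f' x)
    (hf' : 0 < f') : ∀ᶠ y in 𝓝[<] x, f y < f x := by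
  have hslope : ∀ᶠ y in 𝓝[<] x, 0 < slope f x y :=
    (hf.tendsto_slope.mono_left (nhdsLT_le_nhdsNE x)).eventually (lt_mem_nhds hf')
  filter_upwards [hslope, self_mem_nhdsWithin] with y hy (hyx : y < x)
  rw [slope_comm, slope_def_field, div_pos_iff_of_pos_right (sub_pos.2 hyx)] at hy
  exact sub_pos.1 hy

theorem image_le_of_deriv_neg_above {f f' : ℝ → ℝ} {a c : ℝ}
    (hf : ∀ t, a ≤ t → HasDerivWithinAt f (f' t) (Ici a) t) (ha : f a ≤ c)
    (hc : ∀ᶠ b in 𝓝[>] c, ∀ t, a ≤ t → f t = b → f' t < 0) :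
    ∀ t, a ≤ t → f t ≤ c := by
  intro t ht
  by_contra! hct
  obtain ⟨b, hb, hcb, hbt⟩ := (hc.and (Ioo_mem_nhdsGT hct)).exists
  have hfb : f t ≤ b :=
    image_le_of_deriv_right_lt_deriv_boundary' (B := fun _ ↦ b) (B' := fun _ ↦ 0)
      (fun x hx ↦ (hf x hx.1).continuousWithinAt.mono (Icc_subset_Ici_self))
      (fun x hx ↦ (hf x hx.1).mono (Ici_subset_Ici.2 hx.1)) (ha.trans hcb.le)
      continuousOn_const (fun x _ ↦ hasDerivWithinAt_const x _ b)
      (fun x hx hfx ↦ hb x hx.1 hfx) ⟨ht, le_rfl⟩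
  exact hfb.not_gt hbt

theorem le_image_of_deriv_pos_below {f f' : ℝ → ℝ} {a c : ℝ}
    (hf : ∀ t, a ≤ t → HasDerivWithinAt f (f' t) (Ici a) t) (ha : c ≤ f a)
    (hc : ∀ᶠ b in 𝓝[<] c, ∀ t, a ≤ t → f t = b → 0 < f' t) :
    ∀ t, a ≤ t → c ≤ f t := by
  have hneg : ∀ᶠ b in 𝓝[>] (-c), ∀ t, a ≤ t → -f t = b → -f' t < 0 := by
    filter_upwards [tendsto_neg_nhdsGT_neg.eventually hc] with b hb t ht hfb
    exact neg_neg_iff_pos.2 (hb t ht (by rw [← hfb, neg_neg]))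
  intro t ht
  exact neg_le_neg_iff.1 <|
    image_le_of_deriv_neg_above (fun t ht ↦ (hf t ht).neg) (neg_le_neg ha) hneg t ht

theorem mem_Icc_of_hasDerivWithinAt_sub {F w f : ℝ → ℝ} {a lo hi : ℝ}
    (hf : ∀ t, a ≤ t → HasDerivWithinAt f (w t - F (f t)) (Ici a) t)
    (hw : ∀ t, a ≤ t → w t ∈ Icc (F lo) (F hi))
    (hlo : ∀ᶠ x in 𝓝[<] lo, F x < F lo) (hhi : ∀ᶠ x in 𝓝[>] hi, F hi < F x)
    (ha : f a ∈ Icc lo hi) : ∀ t, a ≤ t → f t ∈ Icc lo hi := by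
  intro t ht
  constructor
  · refine le_image_of_deriv_pos_below hf ha.1 ?_ t ht
    filter_upwards [hlo] with b hb s hs hfs
    rw [hfs]
    linarith [(hw s hs).1]
  · refine image_le_of_deriv_neg_above hf ha.2 ?_ t ht
    filter_upwards [hhi] with b hb s hs hfs
    rw [hfs]
    linarith [(hw s hs).2]

section FollowTheLeader

variable {v : ℝ → ℝ} {ℓ : ℝ}

theorem hasDerivAt_comp_const_div {d ρ : ℝ} (hv : HasDerivAt v d ρ) (hℓ : ℓ ≠ 0)
    (hρ : ρ ≠ 0) : HasDerivAt (fun x ↦ v (ℓ / x)) (-(d * ρ ^ 2 / ℓ)) (ℓ / ρ) := by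
  have hdiv : HasDerivAt (fun x ↦ ℓ / x) (-ℓ / (ℓ / ρ) ^ 2) (ℓ / ρ) := by
    simpa [div_eq_mul_inv, neg_div] using (hasDerivAt_inv (div_ne_zero hℓ hρ)).const_mul ℓ
  rw [← div_div_cancel₀ hℓ (b := ρ)] at hv
  refine (hv.comp (ℓ / ρ) hdiv).congr_deriv ?_
  field_simp

theorem gap_mem_Icc {δ R dδ dR : ℝ} (hvδ : HasDerivAt v dδ δ) (hdδ : dδ < 0)
    (hvR : HasDerivAt v dR R) (hdR : dR < 0) (hδ : 0 < δ) (hR : 0 < R) (hℓ : 0 < ℓ)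
    {g w : ℝ → ℝ} (hg : ∀ t, 0 ≤ t → HasDerivWithinAt g (w t - v (ℓ / g t)) (Ici 0) t)
    (hw : ∀ t, 0 ≤ t → w t ∈ Icc (v R) (v δ)) (hg0 : g 0 ∈ Icc (ℓ / R) (ℓ / δ)) :
    ∀ t, 0 ≤ t → g t ∈ Icc (ℓ / R) (ℓ / δ) := by
  have hpos : ∀ {d ρ : ℝ}, d < 0 → 0 < ρ → 0 < -(d * ρ ^ 2 / ℓ) := fun hd hρ ↦
    neg_pos.2 (div_neg_of_neg_of_pos (mul_neg_of_neg_of_pos hd (pow_pos hρ 2)) hℓ)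
  refine mem_Icc_of_hasDerivWithinAt_sub (F := fun x ↦ v (ℓ / x)) hg ?_
    ((hasDerivAt_comp_const_div hvR hℓ.ne' hR.ne').eventually_nhdsLT_lt (hpos hdR hR))
    ((hasDerivAt_comp_const_div hvδ hℓ.ne' hδ.ne').eventually_nhdsGT_lt (hpos hdδ hδ)) hg0
  simpa only [div_div_cancel₀ hℓ.ne'] using hw

theorem speed_mem_Icc {δ R : ℝ} (hv : AntitoneOn v (Icc δ R)) (hδ : 0 < δ) (hR : 0 < R)
    (hℓ : 0 < ℓ) {g : ℝ} (hg : g ∈ Icc (ℓ / R) (ℓ / δ)) : v (ℓ / g) ∈ Icc (v R) (v δ) := by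
  have hg0 : 0 < g := (div_pos hℓ hR).trans_le hg.1
  have hρ : ℓ / g ∈ Icc δ R := by
    constructor
    · rw [le_div_iff₀ hg0]
      exact (le_div_iff₀' hδ).1 hg.2
    · rw [div_le_iff₀ hg0]
      exact (div_le_iff₀' hR).1 hg.1
  exact ⟨hv hρ ⟨hρ.1.trans hρ.2, le_rfl⟩ hρ.2, hv ⟨le_rfl, hρ.1.trans hρ.2⟩ hρ hρ.1⟩

end FollowTheLeader

theorem stmt9_general
    -- velocity hypothesis (V1)
    (ρmax : ℝ)
    (v v' : ℝ → ℝ)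
    (hv_deriv : ∀ r ∈ Set.Icc (0:ℝ) ρmax, HasDerivAt v (v' r) r)
    (hv'_neg : ∀ r ∈ Set.Icc (0:ℝ) ρmax, v' r < 0)
    -- data
    (δ R ℓ ρhat : ℝ) (hδ : 0 < δ) (hδR : δ ≤ R) (hRρmax : R ≤ ρmax)
    (hℓ : 0 < ℓ) (hρhat : ρhat ∈ Set.Icc δ R)
    -- the particle system
    (M : ℕ)
    (y : ℕ → ℝ → ℝ)
    (hODE : ∀ i, i < M → ∀ t, 0 ≤ t →
        HasDerivWithinAt (y i) (v (ℓ / (y (i+1) t - y i t))) (Set.Ici 0) t)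
    (hlead : ∀ t, 0 ≤ t → HasDerivWithinAt (y M) (v ρhat) (Set.Ici 0) t)
    (hgap0 : ∀ i, i < M → ℓ / R ≤ y (i+1) 0 - y i 0 ∧ y (i+1) 0 - y i 0 ≤ ℓ / δ) :
    ∀ t, 0 ≤ t → ∀ i, i < M →
      ℓ / R ≤ y (i+1) t - y i t ∧ y (i+1) t - y i t ≤ ℓ / δ := by
  have hR : 0 < R := hδ.trans_le hδR
  have hmem : ∀ {r}, r ∈ Icc δ R → r ∈ Icc 0 ρmax := fun hr ↦
    ⟨hδ.le.trans hr.1, hr.2.trans hRρmax⟩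
  have hanti : AntitoneOn v (Icc δ R) :=
    (strictAntiOn_of_hasDerivWithinAt_neg (convex_Icc 0 ρmax)
      (fun r hr ↦ (hv_deriv r hr).continuousAt.continuousWithinAt)
      (fun r hr ↦ (hv_deriv r (interior_subset hr)).hasDerivWithinAt)
      (fun r hr ↦ hv'_neg r (interior_subset hr))).antitoneOn.mono fun _ ↦ hmem
  have hδmem : δ ∈ Icc 0 ρmax := hmem ⟨le_rfl, hδR⟩
  have hRmem : R ∈ Icc 0 ρmax := hmem ⟨hδR, le_rfl⟩
  have hgap : ∀ i, i < M → ∀ {w : ℝ → ℝ},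
      (∀ t, 0 ≤ t → HasDerivWithinAt (y (i+1)) (w t) (Ici 0) t) →
      (∀ t, 0 ≤ t → w t ∈ Icc (v R) (v δ)) →
      ∀ t, 0 ≤ t → y (i+1) t - y i t ∈ Icc (ℓ / R) (ℓ / δ) := fun i hi _ hw hwmem ↦
    gap_mem_Icc (hv_deriv δ hδmem) (hv'_neg δ hδmem) (hv_deriv R hRmem) (hv'_neg R hRmem)
      hδ hR hℓ (fun t ht ↦ (hw t ht).sub (hODE i hi t ht)) hwmem (hgap0 i hi)
  suffices h : ∀ i ≤ M, i < M → ∀ t, 0 ≤ t → y (i+1) t - y i t ∈ Icc (ℓ / R) (ℓ / δ) from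
    fun t ht i hi ↦ h i hi.le hi t ht
  intro i hiM
  induction hiM using Nat.decreasingInduction with
  | self => exact fun h ↦ absurd h (lt_irrefl M)
  | of_succ i hi ih =>
    intro _
    rcases (Nat.succ_le_of_lt hi).lt_or_eq with hnext | rfl
    · exact hgap i hi (hODE (i+1) hnext) fun t ht ↦ speed_mem_Icc hanti hδ hR hℓ (ih hnext t ht)
    · exact hgap i hi hlead fun _ _ ↦
        ⟨hanti hρhat ⟨hδR, le_rfl⟩ hρhat.2, hanti ⟨le_rfl, hδR⟩ hρhat hρhat.1⟩

/-- **Discrete maximum–minimum principle for the follow-the-leader scheme with boundary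
data.**  If the initial gaps of the particles `y₀ < … < y_M` lie in `[ℓ/R, ℓ/δ]`, the
interior particles follow the leader and the leader moves with speed `v(ρ̂)` for some
`ρ̂ ∈ [δ,R]`, then the gaps remain in `[ℓ/R, ℓ/δ]` for all times. -/
theorem stmt9
    -- velocity hypothesis (V1)
    (ρmax vmax : ℝ) (hρmax : 0 < ρmax) (hvmaxpos : 0 < vmax)
    (v v' : ℝ → ℝ)
    (hv_deriv : ∀ r ∈ Set.Icc (0:ℝ) ρmax, HasDerivAt v (v' r) r)
    (hv'_cont : ContinuousOn v' (Set.Icc (0:ℝ) ρmax))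
    (hv'_neg : ∀ r ∈ Set.Icc (0:ℝ) ρmax, v' r < 0)
    (hv_range : ∀ r ∈ Set.Icc (0:ℝ) ρmax, v r ∈ Set.Icc (0:ℝ) vmax)
    (hv0 : v 0 = vmax) (hvρmax : v ρmax = 0)
    -- data
    (δ R ℓ ρhat : ℝ) (hδ : 0 < δ) (hδR : δ ≤ R) (hRρmax : R ≤ ρmax)
    (hℓ : 0 < ℓ) (hρhat : ρhat ∈ Set.Icc δ R)
    -- the particle system
    (M : ℕ) (hM : 1 ≤ M)
    (y : ℕ → ℝ → ℝ)
    (hODE : ∀ i, i < M → ∀ t, 0 ≤ t →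
        HasDerivWithinAt (y i) (v (ℓ / (y (i+1) t - y i t))) (Set.Ici 0) t)
    (hlead : ∀ t, 0 ≤ t → HasDerivWithinAt (y M) (v ρhat) (Set.Ici 0) t)
    (horder : ∀ t, 0 ≤ t → ∀ i, i < M → y i t < y (i+1) t)
    (hgap0 : ∀ i, i < M → ℓ / R ≤ y (i+1) 0 - y i 0 ∧ y (i+1) 0 - y i 0 ≤ ℓ / δ) :
    ∀ t, 0 ≤ t → ∀ i, i < M →
      ℓ / R ≤ y (i+1) t - y i t ∧ y (i+1) t - y i t ≤ ℓ / δ :=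
  stmt9_general ρmax v v' hv_deriv hv'_neg δ R ℓ ρhat hδ hδR hRρmax hℓ hρhat M y hODE hlead hgap0
end

section
/- Intra-step Wasserstein continuity for the follow-the-leader scheme with boundary data: under the hypotheses of the IBVP FTL scheme, for every k and every k τ_m < s < t < (k+1) τ_m one has W_{Q+L,1}(ρ^{n,m}(t,·), ρ^{n,m}(s,·)) ≤ (3/2)(Q + L) v_max (t − s). -/
open MeasureTheory Set Filter Topology
open scoped ENNReal NNReal

noncomputable section

/-- Mass carried by particle `i` (`q` for the leftmost queuing particle `i = -N`, `ℓ`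
otherwise). -/
def pmass (q ℓ : ℝ) (N : ℕ) (i : ℤ) : ℝ := if i = -(N : ℤ) then q else ℓ

/-- Index `k` of the time interval `(k τ, (k+1) τ]` containing `t`. -/
def kIdx (τ t : ℝ) : ℕ := ⌈t / τ⌉₊ - 1

/-- The follow-the-leader scheme for the initial-boundary value problem for the LWR model
on `Ω = (0,1)`, with time-varying Dirichlet boundary data `rb0`, `rb1` (discretized with
time step `τ = T/m`), `n` particles discretizing the initial datum `rbar`, `N` queuing
particles of total mass `Q`, and rearrangement of the particles outside `Ω` at each time
`k τ`. -/
structure FTLibvp (ρmax vmax T : ℝ) (v rbar rb0 rb1 : ℝ → ℝ) (n m : ℕ) where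
  /-- particle positions on the `k`-th time interval -/
  x : ℕ → ℤ → ℝ → ℝ
  /-- initial particle positions -/
  xbar : ℤ → ℝ
  /-- number of particles that strictly crossed `x = 0` during `(0, k τ]` -/
  h0 : ℕ → ℕ
  /-- number of particles that crossed `x = 1` during `(0, k τ]` -/
  h1 : ℕ → ℕ
  L : ℝ
  ℓ : ℝ
  τ : ℝ
  Q : ℝ
  N : ℕ
  q : ℝ
  hL : L = ∫ y in Set.Ioo (0:ℝ) 1, rbar y
  hℓ : ℓ = L / n
  hτ : τ = T / m
  hQ : Q = 2 * T * vmax * ρmax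
  hN : N = ⌈Q / ℓ⌉₊
  hq : q = Q - ℓ * ((N : ℝ) - 1)
  init0 : xbar 0 = 0
  initpos : ∀ i : ℤ, 1 ≤ i → i ≤ (n : ℤ) →
    xbar i = sSup {y : ℝ | y ∈ Set.Ioo (0:ℝ) 1 ∧ (∫ s in Set.Ioc (xbar (i-1)) y, rbar s) < ℓ}
  initqueue : ∀ i : ℤ, -(N : ℤ) + 1 ≤ i → i ≤ -1 → xbar i = (i : ℝ) * (ℓ / rb0 0)
  initlast : xbar (-(N : ℤ)) = xbar (-(N : ℤ) + 1) - q / rb0 0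
  ic : ∀ i : ℤ, -(N : ℤ) ≤ i → i ≤ (n : ℤ) → x 0 i 0 = xbar i
  order : ∀ k : ℕ, k < m → ∀ t ∈ Set.Icc ((k : ℝ) * τ) (((k : ℝ) + 1) * τ),
    ∀ i : ℤ, -(N : ℤ) ≤ i → i ≤ (n : ℤ) - 1 → x k i t < x k (i+1) t
  ode : ∀ k : ℕ, k < m → ∀ i : ℤ, -(N : ℤ) ≤ i → i ≤ (n : ℤ) - 1 →
    ∀ t ∈ Set.Icc ((k : ℝ) * τ) (((k : ℝ) + 1) * τ),
      HasDerivWithinAt (x k i)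
        (v (pmass q ℓ N i / (x k (i+1) t - x k i t)))
        (Set.Icc ((k : ℝ) * τ) (((k : ℝ) + 1) * τ)) t
  odeLead : ∀ k : ℕ, k < m → ∀ t ∈ Set.Icc ((k : ℝ) * τ) (((k : ℝ) + 1) * τ),
      HasDerivWithinAt (x k (n : ℤ)) (v (rb1 ((k : ℝ) * τ)))
        (Set.Icc ((k : ℝ) * τ) (((k : ℝ) + 1) * τ)) t
  cross0 : ∀ k : ℕ, 1 ≤ k → k ≤ m → ∀ i : ℤ, -(N : ℤ) ≤ i → i ≤ (n : ℤ) →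
    (0 < x (k-1) i ((k : ℝ) * τ) ↔ -(h0 k : ℤ) ≤ i)
  cross1 : ∀ k : ℕ, 1 ≤ k → k ≤ m → ∀ i : ℤ, -(N : ℤ) ≤ i → i ≤ (n : ℤ) →
    (1 ≤ x (k-1) i ((k : ℝ) * τ) ↔ (n : ℤ) - (h1 k : ℤ) + 1 ≤ i)
  rearrMid : ∀ k : ℕ, 1 ≤ k → k < m → ∀ i : ℤ,
    -(h0 k : ℤ) - 1 ≤ i → i ≤ (n : ℤ) - (h1 k : ℤ) + 1 →
    x k i ((k : ℝ) * τ) = x (k-1) i ((k : ℝ) * τ)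
  rearrRight : ∀ k : ℕ, 1 ≤ k → k < m → ∀ i : ℤ,
    (n : ℤ) - (h1 k : ℤ) + 2 ≤ i → i ≤ (n : ℤ) →
    x k i ((k : ℝ) * τ) =
      x (k-1) ((n : ℤ) - (h1 k : ℤ) + 1) ((k : ℝ) * τ) +
        ((i : ℝ) - (n : ℝ) + (h1 k : ℝ) - 1) * (ℓ / rb1 ((k : ℝ) * τ))
  rearrLeft : ∀ k : ℕ, 1 ≤ k → k < m → ∀ i : ℤ,
    -(N : ℤ) + 1 ≤ i → i ≤ -(h0 k : ℤ) - 2 →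
    x k i ((k : ℝ) * τ) =
      x (k-1) (-(h0 k : ℤ) - 1) ((k : ℝ) * τ) +
        ((i : ℝ) + (h0 k : ℝ) + 1) * (ℓ / rb0 ((k : ℝ) * τ))
  rearrLast : ∀ k : ℕ, 1 ≤ k → k < m →
    x k (-(N : ℤ)) ((k : ℝ) * τ) = x k (-(N : ℤ) + 1) ((k : ℝ) * τ) - q / rb0 ((k : ℝ) * τ)

/-- The discrete density `ρ^{n,m}(t,·)` of the IBVP follow-the-leader scheme. -/
def FTLibvp.dens {ρmax vmax T : ℝ} {v rbar rb0 rb1 : ℝ → ℝ} {n m : ℕ}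
    (S : FTLibvp ρmax vmax T v rbar rb0 rb1 n m) (t y : ℝ) : ℝ :=
  ∑ i ∈ Finset.Icc (-(S.N : ℤ)) ((n : ℤ) - 1),
    Set.indicator (Set.Ico (S.x (kIdx S.τ t) i t) (S.x (kIdx S.τ t) (i+1) t))
      (fun _ => pmass S.q S.ℓ S.N i /
        (S.x (kIdx S.τ t) (i+1) t - S.x (kIdx S.τ t) i t)) y

/-- Pseudo-inverse of (the cumulative distribution of) a density `ρ`. -/
def pseudoInv (ρ : ℝ → ℝ) (z : ℝ) : ℝ :=
  sInf {x : ℝ | z < ∫ y in Set.Iic x, ρ y}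

/-- Scaled 1-Wasserstein distance `W_{M,1}` between two densities of total mass `M`. -/
def scaledWass (M : ℝ) (ρ₁ ρ₂ : ℝ → ℝ) : ℝ :=
  ∫ z in Set.Ioc (0:ℝ) M, |pseudoInv ρ₁ z - pseudoInv ρ₂ z|

/-!
Within one time step every particle moves with a velocity in `[0, vmax]`, provided the discrete
densities `Rᵢ = pᵢ / (xᵢ₊₁ - xᵢ)` stay below `ρmax`. This maximum principle holds initially and
after each rearrangement, where all spacings are `ℓ / ρ̄` or `q / ρ̄` with `ρ̄ ≤ ρmax`, and it
propagates through a time step from the leader backwards: when `Rᵢ` reaches `ρmax` particle `i`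
stops (`v ρmax = 0`) while its leader does not move backwards, and differentiability of `v` at
`ρmax` makes this a Gronwall-type barrier argument. Hence particles move by at most
`c = vmax (t - s)`, so the cumulative distribution of `ρ(s)` at `y` is at most that of `ρ(t)` at
`y + c` and vice versa; the pseudo-inverses then differ by at most `c` pointwise, and integrating
over `(0, Q + L]` gives `W ≤ (Q + L) c`.
-/

lemma nonpos_of_deriv_le_mul_of_pos_of_lt {f f' : ℝ → ℝ} {a b C η : ℝ} (hη : 0 < η)
    (hf : ContinuousOn f (Icc a b)) (hf' : ∀ x ∈ Ico a b, HasDerivWithinAt f (f' x) (Ici x) x)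
    (ha : f a ≤ 0) (hbound : ∀ x ∈ Ico a b, 0 < f x → f x < η → f' x ≤ C * f x) :
    ∀ x ∈ Icc a b, f x ≤ 0 := by
  set K := |C| + 1
  -- compare with the barriers `ε exp (K (x - b))`, which stay below `ε` on `[a, b]`
  have below : ∀ ε, 0 < ε → ε < η → ∀ x ∈ Icc a b, f x ≤ ε := by
    intro ε hε hεη x hx
    have hB : ∀ y, HasDerivAt (fun y => ε * Real.exp (K * (y - b)))
        (ε * Real.exp (K * (y - b)) * K) y := fun y => by
      simpa [mul_assoc] using (((hasDerivAt_id y).sub_const b).const_mul K).exp.const_mul ε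
    have hBle : ∀ y ≤ b, ε * Real.exp (K * (y - b)) ≤ ε := fun y hy =>
      mul_le_of_le_one_right hε.le (Real.exp_le_one_iff.mpr
        (mul_nonpos_of_nonneg_of_nonpos (by positivity) (by linarith)))
    calc f x ≤ ε * Real.exp (K * (x - b)) := by
          refine image_le_of_deriv_right_lt_deriv_boundary hf hf' (ha.trans (by positivity)) hB
            (fun y hy hfy => ?_) hx
          have hpos : 0 < f y := hfy ▸ by positivity
          calc f' y ≤ C * f y := hbound y hy hpos (hfy ▸ (hBle y hy.2.le).trans_lt hεη)
            _ ≤ |C| * f y := by gcongr; exact le_abs_self C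
            _ < K * f y := by gcongr; linarith
            _ = _ := by rw [hfy]; ring
      _ ≤ ε := hBle x hx.2
  intro x hx
  by_contra! hpos
  have := below (min (f x) η / 2) (by positivity) (by linarith [min_le_right (f x) η]) x hx
  linarith [min_le_left (f x) η]

lemma le_mul_of_hasDerivWithinAt_sub_comp_div {v G W : ℝ → ℝ} {v₀ ρ p a b : ℝ} (hρ : 0 < ρ)
    (hp : 0 < p) (hv : HasDerivAt v v₀ ρ) (hvρ : v ρ = 0)
    (hG : ∀ x ∈ Icc a b, HasDerivWithinAt G (W x - v (p / G x)) (Icc a b) x)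
    (hW : ∀ x ∈ Icc a b, 0 ≤ W x) (ha : p ≤ ρ * G a) : ∀ x ∈ Icc a b, p ≤ ρ * G x := by
  -- `y ↦ v (p / (p / ρ - y))` vanishes and is differentiable at `0`, hence `O(y)` there
  have hφ : HasDerivAt (fun y => p / (p / ρ - y)) _ 0 :=
    ((differentiableAt_const p).div ((differentiableAt_const _).sub differentiableAt_id)
      (by simp [hp.ne', hρ.ne'])).hasDerivAt
  have hφ0 : ρ = p / (p / ρ - 0) := by rw [sub_zero, div_div_cancel₀ hp.ne']
  obtain ⟨C, hC⟩ := ((hv.comp_of_eq 0 hφ hφ0).isBigO_sub).bound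
  obtain ⟨η, hη, hball⟩ := Metric.eventually_nhds_iff.mp hC
  have hφη : ∀ y, 0 < y → y < η → v (p / (p / ρ - y)) ≤ C * y := fun y hy hyη => by
    have := hball (show dist y 0 < η by rwa [Real.dist_eq, sub_zero, abs_of_pos hy])
    simp only [Function.comp, sub_zero, div_div_cancel₀ hp.ne', hvρ, Real.norm_eq_abs,
      abs_of_pos hy] at this
    exact (le_abs_self _).trans this
  have key := nonpos_of_deriv_le_mul_of_pos_of_lt (f := fun x => p / ρ - G x)
    (f' := fun x => v (p / G x) - W x) (C := C) hη
    (fun x hx => ((hG x hx).continuousWithinAt).const_sub _)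
    (fun x hx => ((hG x (Ico_subset_Icc_self hx)).mono_of_mem_nhdsWithin
      (Icc_mem_nhdsGE_of_mem hx)).const_sub _ |>.congr_deriv (by ring))
    (by rw [sub_nonpos, div_le_iff₀ hρ]; linarith)
    (fun x hx hpos hlt => by
      have := hφη _ hpos hlt
      rw [sub_sub_cancel] at this
      linarith [hW x (Ico_subset_Icc_self hx)])
  intro x hx
  have := key x hx
  rw [sub_nonpos, div_le_iff₀ hρ] at this
  linarith

lemma sSup_mem_Ioc_and_map_sSup_eq {Φ : ℝ → ℝ} {a c : ℝ} (hΦ : ContinuousOn Φ (Icc 0 1))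
    (ha : a ∈ Icc (0:ℝ) 1) (hac : Φ a < c) (hc : c ≤ Φ 1) :
    sSup {y | y ∈ Ioo (0:ℝ) 1 ∧ Φ y < c} ∈ Ioc a 1 ∧
      Φ (sSup {y | y ∈ Ioo (0:ℝ) 1 ∧ Φ y < c}) = c := by
  set A := {y | y ∈ Ioo (0:ℝ) 1 ∧ Φ y < c}
  have ha1 : a < 1 := lt_of_le_of_ne ha.2 (by rintro rfl; linarith)
  have hIoo : ∀ x : ℝ, 0 ≤ x → Ioo x 1 ⊆ Icc 0 1 := fun _ hx =>
    Ioo_subset_Icc_self.trans (Icc_subset_Icc_left hx)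
  obtain ⟨y, hyA, hay⟩ : ∃ y ∈ A, a < y := by
    have hev : ∀ᶠ y in 𝓝[>] a, y ∈ Ioo a 1 ∧ Φ y < c :=
      Filter.Eventually.and (Ioo_mem_nhdsGT ha1)
        ((hΦ a ha).eventually_lt continuousWithinAt_const hac |>.filter_mono
          (nhdsWithin_le_of_mem (mem_of_superset (Ioo_mem_nhdsGT ha1) (hIoo a ha.1))))
    obtain ⟨y, hy, hyc⟩ := hev.exists
    exact ⟨y, ⟨⟨ha.1.trans_lt hy.1, hy.2⟩, hyc⟩, hy.1⟩
  have hbdd : BddAbove A := ⟨1, fun y hy => hy.1.2.le⟩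
  set b := sSup A
  have hab : a < b := hay.trans_le (le_csSup hbdd hyA)
  have hb1 : b ≤ 1 := csSup_le ⟨y, hyA⟩ fun y hy => hy.1.2.le
  have hb : b ∈ Icc 0 1 := ⟨ha.1.trans hab.le, hb1⟩
  refine ⟨⟨hab, hb1⟩, le_antisymm ?_ ?_⟩
  · exact ContinuousWithinAt.closure_le (csSup_mem_closure ⟨y, hyA⟩ hbdd)
      ((hΦ b hb).mono fun y hy => Ioo_subset_Icc_self hy.1) continuousWithinAt_const
      fun y hy => hy.2.le
  · rcases hb1.lt_or_eq with hb1 | hb1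
    · have hb_mem : b ∈ closure (Ioo b 1) := by
        rw [closure_Ioo hb1.ne]; exact left_mem_Icc.mpr hb1.le
      refine ContinuousWithinAt.closure_le hb_mem continuousWithinAt_const
        ((hΦ b hb).mono (hIoo b hb.1)) fun y hy => not_lt.mp fun hyc => ?_
      exact (le_csSup hbdd ⟨⟨hb.1.trans_lt hy.1, hy.2⟩, hyc⟩).not_gt hy.1
    · rwa [hb1]

lemma le_mul_div_of_le {p r ρ : ℝ} (hp : 0 ≤ p) (hr : 0 < r) (hrρ : r ≤ ρ) :
    p ≤ ρ * (p / r) := by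
  rw [← mul_div_assoc, le_div_iff₀ hr, mul_comm]
  exact mul_le_mul_of_nonneg_right hrρ hp

lemma kIdx_eq {τ u : ℝ} {k : ℕ} (hτ : 0 < τ) (h₁ : k * τ < u) (h₂ : u ≤ (k + 1) * τ) :
    kIdx τ u = k := by
  have : ⌈u / τ⌉₊ = k + 1 := (Nat.ceil_eq_iff k.succ_ne_zero).mpr
    ⟨by rwa [Nat.succ_sub_one, lt_div_iff₀ hτ], by push_cast; rwa [div_le_iff₀ hτ]⟩
  rw [kIdx, this, Nat.add_sub_cancel]

def blockCDF (p a b y : ℝ) : ℝ := p / (b - a) * max (min y b - a) 0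

lemma integral_Iic_indicator_Ico (p a b y : ℝ) :
    ∫ z in Iic y, (Ico a b).indicator (fun _ => p / (b - a)) z = blockCDF p a b y := by
  have hvol : volume (Iic y ∩ Ico a b) = ENNReal.ofReal (min y b - a) := by
    refine le_antisymm ?_ ?_
    · calc volume (Iic y ∩ Ico a b) ≤ volume (Icc a (min y b)) :=
            measure_mono fun z hz => ⟨hz.2.1, le_min hz.1 hz.2.2.le⟩
        _ = _ := Real.volume_Icc
    · calc ENNReal.ofReal (min y b - a) = volume (Ico a (min y b)) := Real.volume_Ico.symm
        _ ≤ volume (Iic y ∩ Ico a b) := measure_mono fun z hz =>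
            ⟨hz.2.le.trans (min_le_left _ _), hz.1, hz.2.trans_le (min_le_right _ _)⟩
  rw [setIntegral_indicator measurableSet_Ico, setIntegral_const, measureReal_def, hvol,
    ENNReal.toReal_ofReal', smul_eq_mul, mul_comm, blockCDF]

lemma integral_Iic_sum_indicator_Ico {ι : Type*} (s : Finset ι) (p a b : ι → ℝ) (y : ℝ) :
    ∫ z in Iic y, ∑ i ∈ s, (Ico (a i) (b i)).indicator (fun _ => p i / (b i - a i)) z =
      ∑ i ∈ s, blockCDF (p i) (a i) (b i) y := by
  rw [integral_finsetSum s fun i _ =>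
    ((integrableOn_const measure_Ico_lt_top.ne).integrable_indicator measurableSet_Ico).restrict]
  exact Finset.sum_congr rfl fun i _ => integral_Iic_indicator_Ico _ _ _ _

lemma blockCDF_le {p a b : ℝ} (hp : 0 ≤ p) (hab : a < b) (y : ℝ) : blockCDF p a b y ≤ p := by
  rw [blockCDF, div_mul_eq_mul_div, div_le_iff₀ (sub_pos.mpr hab)]
  exact mul_le_mul_of_nonneg_left (max_le (by linarith [min_le_right y b]) (sub_pos.mpr hab).le) hp

lemma blockCDF_of_le {p a b y : ℝ} (hab : a < b) (hby : b ≤ y) : blockCDF p a b y = p := by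
  rw [blockCDF, min_eq_right hby, max_eq_left (sub_pos.mpr hab).le,
    div_mul_cancel₀ _ (sub_pos.mpr hab).ne']

lemma blockCDF_of_le_left {p a b y : ℝ} (hya : y ≤ a) : blockCDF p a b y = 0 := by
  rw [blockCDF, max_eq_right (by linarith [min_le_left y b]), mul_zero]

lemma blockCDF_le_add {p a b a' b' c : ℝ} (hp : 0 ≤ p) (hab : a < b) (hab' : a' < b')
    (ha : a' ≤ a + c) (hb : b' ≤ b + c) (y : ℝ) :
    blockCDF p a b y ≤ blockCDF p a' b' (y + c) := by
  rw [blockCDF, blockCDF, div_mul_eq_mul_div, div_mul_eq_mul_div,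
    div_le_div_iff₀ (by linarith) (by linarith), mul_assoc, mul_assoc]
  refine mul_le_mul_of_nonneg_left ?_ hp
  rcases le_total b' (y + c) with hb'y | hyb'
  · rw [min_eq_right hb'y, max_eq_left (show 0 ≤ b' - a' by linarith), mul_comm _ (b - a)]
    exact mul_le_mul_of_nonneg_right
      (max_le (by linarith [min_le_right y b]) (by linarith)) (by linarith)
  · rw [min_eq_left hyb', min_eq_left (by linarith)]
    rcases le_total y a with hya | hay
    · rw [max_eq_right (by linarith), zero_mul]
      exact mul_nonneg (le_max_right _ _) (by linarith)
    · rw [max_eq_left (by linarith), max_eq_left (by linarith)]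
      nlinarith [mul_nonneg (sub_nonneg.mpr hay) (sub_nonneg.mpr hb),
        mul_nonneg (sub_nonneg.mpr (show y ≤ b by linarith)) (sub_nonneg.mpr ha)]

lemma pseudoInv_le_add {ρ σ : ℝ → ℝ} {z c : ℝ} (hne : {x | z < ∫ y in Iic x, σ y}.Nonempty)
    (hbdd : BddBelow {x | z < ∫ y in Iic x, ρ y})
    (h : ∀ x, ∫ y in Iic x, σ y ≤ ∫ y in Iic (x + c), ρ y) :
    pseudoInv ρ z ≤ pseudoInv σ z + c := by
  have : pseudoInv ρ z - c ≤ pseudoInv σ z := le_csInf hne fun x hx =>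
    sub_le_iff_le_add.mpr (csInf_le hbdd (lt_of_lt_of_le hx (h x)))
  linarith

lemma scaledWass_le_mul_of_cdf_shift {ρ σ : ℝ → ℝ} {M c : ℝ} (hM : 0 ≤ M) (hc : 0 ≤ c)
    (hρ_le : ∀ x, ∫ y in Iic x, ρ y ≤ M) (hσ_le : ∀ x, ∫ y in Iic x, σ y ≤ M)
    (hρ_top : ∃ x, M ≤ ∫ y in Iic x, ρ y) (hσ_top : ∃ x, M ≤ ∫ y in Iic x, σ y)
    (hρ_bot : ∃ x₀, ∀ x < x₀, ∫ y in Iic x, ρ y ≤ 0)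
    (hσ_bot : ∃ x₀, ∀ x < x₀, ∫ y in Iic x, σ y ≤ 0)
    (hρσ : ∀ x, ∫ y in Iic x, ρ y ≤ ∫ y in Iic (x + c), σ y)
    (hσρ : ∀ x, ∫ y in Iic x, σ y ≤ ∫ y in Iic (x + c), ρ y) :
    scaledWass M ρ σ ≤ M * c := by
  have nonempty : ∀ {τ : ℝ → ℝ}, (∃ x, M ≤ ∫ y in Iic x, τ y) → ∀ z < M,
      {x | z < ∫ y in Iic x, τ y}.Nonempty := fun ⟨x, hx⟩ z hz => ⟨x, hz.trans_le hx⟩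
  have bdd : ∀ {τ : ℝ → ℝ}, (∃ x₀, ∀ x < x₀, ∫ y in Iic x, τ y ≤ 0) → ∀ z, 0 < z →
      BddBelow {x | z < ∫ y in Iic x, τ y} := fun ⟨x₀, hx₀⟩ z hz =>
    ⟨x₀, fun x hx => not_lt.mp fun hxx₀ => (hx₀ x hxx₀).not_gt (hz.trans hx)⟩
  -- at `z = M` the defining sets are empty and both pseudo-inverses are `sInf ∅ = 0`
  have empty : ∀ {τ : ℝ → ℝ}, (∀ x, ∫ y in Iic x, τ y ≤ M) → pseudoInv τ M = 0 := by
    intro τ h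
    have : {x | M < ∫ y in Iic x, τ y} = ∅ :=
      eq_empty_of_forall_notMem fun x hx => (h x).not_gt hx
    rw [pseudoInv, this, Real.sInf_empty]
  have pointwise : ∀ z ∈ Ioc 0 M, |pseudoInv ρ z - pseudoInv σ z| ≤ c := by
    rintro z ⟨hz0, hzM⟩
    rcases hzM.lt_or_eq with hzM | rfl
    · rw [abs_sub_le_iff, sub_le_iff_le_add', sub_le_iff_le_add']
      exact ⟨add_comm c _ ▸ pseudoInv_le_add (nonempty hσ_top z hzM) (bdd hρ_bot z hz0) hσρ,
        add_comm c _ ▸ pseudoInv_le_add (nonempty hρ_top z hzM) (bdd hσ_bot z hz0) hρσ⟩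
    · simpa [empty hρ_le, empty hσ_le] using hc
  calc scaledWass M ρ σ ≤ ‖scaledWass M ρ σ‖ := le_abs_self _
    _ ≤ c * volume.real (Ioc 0 M) := norm_setIntegral_le_of_norm_le_const measure_Ioc_lt_top
        fun z hz => (abs_abs _).trans_le (pointwise z hz)
    _ = M * c := by rw [Real.volume_real_Ioc_of_le hM, sub_zero, mul_comm]

namespace FTLibvp

variable {ρmax vmax T : ℝ} {v rbar rb0 rb1 : ℝ → ℝ} {n m : ℕ}
  (S : FTLibvp ρmax vmax T v rbar rb0 rb1 n m)

lemma tau_pos (hT : 0 < T) (hm : 0 < m) : 0 < S.τ := by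
  rw [S.hτ]; positivity

lemma Q_pos (hρ : 0 < ρmax) (hv : 0 < vmax) (hT : 0 < T) : 0 < S.Q := by
  rw [S.hQ]; positivity

lemma ell_pos (hτ : 0 ≤ S.τ) (hm : 0 < m) (hn : 0 < n) (hrbar : ∀ y ∈ Ioo (0:ℝ) 1, 0 ≤ rbar y) :
    0 < S.ℓ := by
  by_contra! hℓ
  -- otherwise the set defining `xbar 1` is empty, so `xbar 1 = sSup ∅ = 0 = xbar 0`
  have hempty : {y | y ∈ Ioo (0:ℝ) 1 ∧ ∫ s in Ioc (S.xbar (1 - 1)) y, rbar s < S.ℓ} = ∅ :=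
    eq_empty_of_forall_notMem fun y ⟨hy, hlt⟩ => by
      rw [sub_self, S.init0] at hlt
      exact (setIntegral_nonneg measurableSet_Ioc fun x hx =>
        hrbar x ⟨hx.1, hx.2.trans_lt hy.2⟩).not_gt (hlt.trans_le hℓ)
  have h01 := S.order 0 hm 0 ⟨by simp, by simpa using hτ⟩ 0 (by simp) (by omega)
  rw [zero_add, S.ic 0 (by simp) (by simp), S.ic 1 (by simp) (by omega), S.init0,
    S.initpos 1 le_rfl (by omega), hempty, Real.sSup_empty] at h01
  exact h01.false

lemma L_eq (hn : 0 < n) : S.L = n * S.ℓ := by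
  rw [S.hℓ, mul_div_cancel₀ _ (Nat.cast_ne_zero.mpr hn.ne')]

lemma integrableOn_rbar (hℓ : 0 < S.ℓ) : IntegrableOn rbar (Ioo 0 1) := by
  by_contra h
  have := S.hℓ
  rw [S.hL, integral_undef h, zero_div] at this
  exact hℓ.ne' this

lemma N_pos (hQ : 0 < S.Q) (hℓ : 0 < S.ℓ) : 0 < S.N := by
  rw [S.hN, Nat.ceil_pos]; positivity

lemma q_pos (hQ : 0 < S.Q) (hℓ : 0 < S.ℓ) : 0 < S.q := by
  have h := Nat.ceil_lt_add_one (div_pos hQ hℓ).le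
  rw [← S.hN] at h
  rw [S.hq]
  nlinarith [(lt_div_iff₀ hℓ).mp (show (S.N : ℝ) - 1 < S.Q / S.ℓ by linarith)]

lemma pmass_pos (hq : 0 < S.q) (hℓ : 0 < S.ℓ) (i : ℤ) : 0 < pmass S.q S.ℓ S.N i := by
  unfold pmass; split_ifs <;> assumption

lemma sum_pmass (hN : 0 < S.N) (hn : 0 < n) :
    ∑ i ∈ Finset.Icc (-(S.N : ℤ)) (n - 1), pmass S.q S.ℓ S.N i = S.Q + S.L := by
  have hsplit : ∀ i : ℤ, pmass S.q S.ℓ S.N i = (if i = -(S.N : ℤ) then S.q - S.ℓ else 0) + S.ℓ :=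
    fun i => by unfold pmass; split_ifs <;> ring
  have hcard : (Finset.Icc (-(S.N : ℤ)) (n - 1)).card = n + S.N := by
    rw [Int.card_Icc]; omega
  rw [Finset.sum_congr rfl fun i _ => hsplit i, Finset.sum_add_distrib, Finset.sum_ite_eq',
    if_pos (Finset.mem_Icc.mpr ⟨le_rfl, by omega⟩), Finset.sum_const, hcard, nsmul_eq_mul,
    S.hq, S.L_eq hn]
  push_cast; ring

def vel (k : ℕ) (i : ℤ) (t : ℝ) : ℝ :=
  if i = n then v (rb1 (k * S.τ)) else v (pmass S.q S.ℓ S.N i / (S.x k (i + 1) t - S.x k i t))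

def DensityBounded (k : ℕ) (t : ℝ) : Prop :=
  ∀ i : ℤ, -(S.N : ℤ) ≤ i → i ≤ n - 1 → pmass S.q S.ℓ S.N i ≤ ρmax * (S.x k (i + 1) t - S.x k i t)

variable {S} {k : ℕ} {i : ℤ} {t : ℝ}

lemma hasDerivWithinAt_vel (hk : k < m) (hi₀ : -(S.N : ℤ) ≤ i) (hi : i ≤ n)
    (ht : t ∈ Icc (k * S.τ) ((k + 1) * S.τ)) :
    HasDerivWithinAt (S.x k i) (S.vel k i t) (Icc (k * S.τ) ((k + 1) * S.τ)) t := by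
  unfold vel
  split_ifs with h
  · subst h; exact S.odeLead k hk t ht
  · exact S.ode k hk i hi₀ (by omega) t ht

lemma vel_mem_Icc (hρ : 0 < ρmax) (hv : ∀ r ∈ Icc 0 ρmax, v r ∈ Icc 0 vmax)
    (hrb1 : rb1 (k * S.τ) ∈ Icc 0 ρmax) (hp : 0 < pmass S.q S.ℓ S.N i)
    (hgap : i ≠ n → pmass S.q S.ℓ S.N i ≤ ρmax * (S.x k (i + 1) t - S.x k i t)) :
    S.vel k i t ∈ Icc 0 vmax := by
  unfold vel
  split_ifs with h
  · exact hv _ hrb1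
  · have hgap := hgap h
    have hG : 0 < S.x k (i + 1) t - S.x k i t := pos_of_mul_pos_right (hp.trans_le hgap) hρ.le
    exact hv _ ⟨(div_pos hp hG).le, (div_le_iff₀ hG).mpr (by linarith)⟩

lemma densityBounded_of_start (hρ : 0 < ρmax) (hv : ∀ r ∈ Icc 0 ρmax, v r ∈ Icc 0 vmax)
    {v₀ : ℝ} (hvρ' : HasDerivAt v v₀ ρmax) (hvρ : v ρmax = 0) (hrb1 : rb1 (k * S.τ) ∈ Icc 0 ρmax)
    (hp : ∀ i, 0 < pmass S.q S.ℓ S.N i) (hk : k < m) (h₀ : S.DensityBounded k (k * S.τ)) :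
    ∀ t ∈ Icc (k * S.τ) ((k + 1) * S.τ), S.DensityBounded k t := by
  set I := Icc ((k : ℝ) * S.τ) ((k + 1) * S.τ)
  have bounded : ∀ i, -(S.N : ℤ) ≤ i → i ≤ n - 1 → (∀ t ∈ I, 0 ≤ S.vel k (i + 1) t) →
      ∀ t ∈ I, pmass S.q S.ℓ S.N i ≤ ρmax * (S.x k (i + 1) t - S.x k i t) := by
    intro i hi₀ hi hW
    refine le_mul_of_hasDerivWithinAt_sub_comp_div hρ (hp i) hvρ' hvρ (fun t ht => ?_) hW
      (h₀ i hi₀ hi)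
    have hvel : S.vel k i t = v (pmass S.q S.ℓ S.N i / (S.x k (i + 1) t - S.x k i t)) :=
      if_neg (by omega)
    exact hvel ▸ (hasDerivWithinAt_vel hk (by omega) (by omega) ht).sub
      (hasDerivWithinAt_vel hk hi₀ (by omega) ht)
  -- downwards from the leader, whose velocity `v (rb1 (k τ))` is nonnegative
  have nonneg : ∀ i ≤ (n : ℤ), -(S.N : ℤ) ≤ i → ∀ t ∈ I, 0 ≤ S.vel k i t := by
    intro i hi
    induction i, hi using Int.leInductionDown with
    | base => exact fun _ t _ => (vel_mem_Icc hρ hv hrb1 (hp n) fun h => absurd rfl h).1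
    | pred i hi ih =>
      intro hi₀ t ht
      refine (vel_mem_Icc hρ hv hrb1 (hp _) fun _ => ?_).1
      exact bounded (i - 1) hi₀ (by omega) (by simpa using ih (by omega)) t ht
  exact fun t ht i hi₀ hi => bounded i hi₀ hi (nonneg (i + 1) (by omega) (by omega)) t ht

lemma abs_x_sub_le (hρ : 0 < ρmax) (hv : ∀ r ∈ Icc 0 ρmax, v r ∈ Icc 0 vmax)
    (hrb1 : rb1 (k * S.τ) ∈ Icc 0 ρmax) (hp : ∀ i, 0 < pmass S.q S.ℓ S.N i) (hk : k < m)
    (hbdd : ∀ t ∈ Icc (k * S.τ) ((k + 1) * S.τ), S.DensityBounded k t) {s : ℝ}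
    (hs : s ∈ Icc (k * S.τ) ((k + 1) * S.τ)) (ht : t ∈ Icc (k * S.τ) ((k + 1) * S.τ))
    (hst : s ≤ t) (hi₀ : -(S.N : ℤ) ≤ i) (hi : i ≤ n) :
    |S.x k i t - S.x k i s| ≤ vmax * (t - s) := by
  have hsub : Icc s t ⊆ Icc ((k : ℝ) * S.τ) ((k + 1) * S.τ) := Icc_subset_Icc hs.1 ht.2
  simpa only [Real.norm_eq_abs] using norm_image_sub_le_of_norm_deriv_le_segment'
    (fun u hu => (hasDerivWithinAt_vel hk hi₀ hi (hsub hu)).mono hsub)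
    (fun u hu => by
      have hvel := vel_mem_Icc hρ hv hrb1 (hp i)
        fun h => hbdd u (hsub (Ico_subset_Icc_self hu)) i hi₀ (by omega)
      rw [Real.norm_of_nonneg hvel.1]; exact hvel.2)
    t (right_mem_Icc.mpr hst)

lemma integrableOn_Icc_rbar (hℓ : 0 < S.ℓ) : IntegrableOn rbar (Icc 0 1) :=
  (integrableOn_Icc_iff_integrableOn_Ioo (f := rbar)).mpr (S.integrableOn_rbar hℓ)

lemma intervalIntegrable_rbar (hℓ : 0 < S.ℓ) {a b : ℝ} (ha : a ∈ Icc (0:ℝ) 1)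
    (hb : b ∈ Icc (0:ℝ) 1) : IntervalIntegrable rbar volume a b :=
  ((integrableOn_Icc_rbar hℓ).mono_set (uIcc_subset_Icc ha hb)).intervalIntegrable

lemma setOf_integral_Ioc_lt_eq (hℓ : 0 < S.ℓ) (hrbar : ∀ y ∈ Ioo (0:ℝ) 1, 0 ≤ rbar y) {a : ℝ}
    (ha : a ∈ Icc 0 1) :
    {y | y ∈ Ioo (0:ℝ) 1 ∧ ∫ s in Ioc a y, rbar s < S.ℓ} =
      {y | y ∈ Ioo (0:ℝ) 1 ∧ ∫ s in (0:ℝ)..y, rbar s < (∫ s in (0:ℝ)..a, rbar s) + S.ℓ} := by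
  have h01 : (0:ℝ) ∈ Icc 0 1 := left_mem_Icc.mpr zero_le_one
  ext y
  refine and_congr_right fun hy => ?_
  rw [← sub_lt_iff_lt_add', intervalIntegral.integral_interval_sub_left
    (intervalIntegrable_rbar hℓ h01 (Ioo_subset_Icc_self hy)) (intervalIntegrable_rbar hℓ h01 ha)]
  rcases le_or_gt a y with hay | hya
  · rw [intervalIntegral.integral_of_le hay]
  · have hmono := intervalIntegral.integral_mono_on_of_le_Ioo hya.le intervalIntegrable_const
      (intervalIntegrable_rbar hℓ (Ioo_subset_Icc_self hy) ha)
      fun x hx => hrbar x ⟨hy.1.trans hx.1, hx.2.trans_le ha.2⟩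
    rw [intervalIntegral.integral_zero] at hmono
    rw [Ioc_eq_empty (not_lt.mpr hya.le), Measure.restrict_empty, integral_zero_measure,
      intervalIntegral.integral_symm]
    constructor <;> intro <;> linarith

lemma xbar_succ_mem_and_integral_eq (hℓ : 0 < S.ℓ)
    (hrbar : ∀ y ∈ Ioo (0:ℝ) 1, 0 ≤ rbar y) {j : ℕ} (hj : j < n) (ha : S.xbar j ∈ Icc 0 1)
    (hΦa : ∫ y in (0:ℝ)..S.xbar j, rbar y = j * S.ℓ) :
    S.xbar (j + 1) ∈ Ioc (S.xbar j) 1 ∧ ∫ y in (0:ℝ)..S.xbar (j + 1), rbar y = (j + 1) * S.ℓ := by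
  set Φ := fun y => ∫ s in (0:ℝ)..y, rbar s
  change Φ (S.xbar j) = j * S.ℓ at hΦa
  have hΦ : ContinuousOn Φ (Icc 0 1) := by
    have := intervalIntegral.continuousOn_primitive_interval (a := 0) (b := 1) (μ := volume)
      (by rw [uIcc_of_le zero_le_one]; exact integrableOn_Icc_rbar hℓ)
    rwa [uIcc_of_le zero_le_one] at this
  have hΦ1 : Φ 1 = n * S.ℓ := by
    simp only [Φ, intervalIntegral.integral_of_le zero_le_one, integral_Ioc_eq_integral_Ioo,
      ← S.hL, S.L_eq (by omega)]
  have hxb := S.initpos (j + 1) (by omega) (by omega)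
  rw [add_sub_cancel_right, setOf_integral_Ioc_lt_eq hℓ hrbar ha] at hxb
  rw [hxb]
  obtain ⟨hmem, hval⟩ := sSup_mem_Ioc_and_map_sSup_eq hΦ ha (by linarith)
    (show Φ (S.xbar j) + S.ℓ ≤ Φ 1 by
      rw [hΦ1, hΦa, ← add_one_mul]; gcongr; exact_mod_cast hj)
  exact ⟨hmem, hval.trans (by rw [hΦa]; ring)⟩

lemma xbar_mem_and_integral_eq (hℓ : 0 < S.ℓ) (hrbar : ∀ y ∈ Ioo (0:ℝ) 1, 0 ≤ rbar y) :
    ∀ j : ℕ, j ≤ n → S.xbar j ∈ Icc 0 1 ∧ ∫ y in (0:ℝ)..S.xbar j, rbar y = j * S.ℓ := by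
  intro j
  induction j with
  | zero => intro; simp [S.init0]
  | succ j ih =>
    intro hj
    obtain ⟨ha, hΦa⟩ := ih (by omega)
    obtain ⟨hb, hΦb⟩ := xbar_succ_mem_and_integral_eq hℓ hrbar hj ha hΦa
    push_cast
    exact ⟨⟨ha.1.trans hb.1.le, hb.2⟩, hΦb⟩

lemma ell_le_mul_xbar_sub (hℓ : 0 < S.ℓ) (hrbar : ∀ y ∈ Ioo (0:ℝ) 1, rbar y ∈ Icc 0 ρmax)
    {j : ℕ} (hj : j < n) :
    S.ℓ ≤ ρmax * (S.xbar (j + 1) - S.xbar j) := by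
  have hrbar₀ : ∀ y ∈ Ioo (0:ℝ) 1, 0 ≤ rbar y := fun y hy => (hrbar y hy).1
  obtain ⟨ha, hΦa⟩ := xbar_mem_and_integral_eq hℓ hrbar₀ j hj.le
  obtain ⟨hb, hΦb⟩ := xbar_succ_mem_and_integral_eq hℓ hrbar₀ hj ha hΦa
  have hb' : S.xbar (j + 1) ∈ Icc (0:ℝ) 1 := ⟨ha.1.trans hb.1.le, hb.2⟩
  have hle := intervalIntegral.integral_mono_on_of_le_Ioo hb.1.le
    (intervalIntegrable_rbar hℓ ha hb') intervalIntegrable_const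
    fun x hx => (hrbar x ⟨ha.1.trans_lt hx.1, hx.2.trans_le hb.2⟩).2
  rw [← intervalIntegral.integral_interval_sub_left
    (intervalIntegrable_rbar hℓ (left_mem_Icc.mpr zero_le_one) hb')
    (intervalIntegrable_rbar hℓ (left_mem_Icc.mpr zero_le_one) ha), hΦa, hΦb,
    intervalIntegral.integral_const, smul_eq_mul] at hle
  linarith

lemma densityBounded_zero (hℓ : 0 < S.ℓ) (hq : 0 ≤ S.q)
    (hrbar : ∀ y ∈ Ioo (0:ℝ) 1, rbar y ∈ Icc 0 ρmax) (hrb0 : rb0 0 ∈ Ioc 0 ρmax) :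
    S.DensityBounded 0 0 := by
  intro i hi₀ hi
  rw [S.ic i hi₀ (by omega), S.ic (i + 1) (by omega) (by omega)]
  by_cases hN : i = -(S.N : ℤ)
  · subst hN
    rw [pmass, if_pos rfl, S.initlast, sub_sub_cancel]
    exact le_mul_div_of_le hq hrb0.1 hrb0.2
  rw [pmass, if_neg hN]
  rcases lt_or_ge i 0 with hneg | hpos
  · have hgap : S.xbar (i + 1) - S.xbar i = S.ℓ / rb0 0 := by
      rw [S.initqueue i (by omega) (by omega)]
      rcases (show i + 1 ≤ 0 by omega).lt_or_eq with hlt | heq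
      · rw [S.initqueue (i + 1) (by omega) (by omega)]; push_cast; ring
      · rw [heq, S.init0, show (i : ℝ) = -1 by exact_mod_cast (by omega : i = -1)]; ring
    rw [hgap]
    exact le_mul_div_of_le hℓ.le hrb0.1 hrb0.2
  · lift i to ℕ using hpos
    exact_mod_cast ell_le_mul_xbar_sub hℓ hrbar (show i < n by omega)

lemma densityBounded_rearrange (hℓ : 0 ≤ S.ℓ) (hq : 0 ≤ S.q)
    (hrb0 : rb0 (k * S.τ) ∈ Ioc 0 ρmax) (hrb1 : rb1 (k * S.τ) ∈ Ioc 0 ρmax) (h1k : 1 ≤ k)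
    (hkm : k < m) (hprev : S.DensityBounded (k - 1) (k * S.τ)) :
    S.DensityBounded k (k * S.τ) := by
  intro i hi₀ hi
  by_cases hN : i = -(S.N : ℤ)
  · subst hN
    rw [pmass, if_pos rfl, S.rearrLast k h1k hkm, sub_sub_cancel]
    exact le_mul_div_of_le hq hrb0.1 hrb0.2
  have hpm : pmass S.q S.ℓ S.N i = S.ℓ := if_neg hN
  have right : S.x k (i + 1) (k * S.τ) - S.x k i (k * S.τ) = S.ℓ / rb1 (k * S.τ) →
      pmass S.q S.ℓ S.N i ≤ ρmax * (S.x k (i + 1) (k * S.τ) - S.x k i (k * S.τ)) := fun h => by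
    rw [hpm, h]; exact le_mul_div_of_le hℓ hrb1.1 hrb1.2
  have left : S.x k (i + 1) (k * S.τ) - S.x k i (k * S.τ) = S.ℓ / rb0 (k * S.τ) →
      pmass S.q S.ℓ S.N i ≤ ρmax * (S.x k (i + 1) (k * S.τ) - S.x k i (k * S.τ)) := fun h => by
    rw [hpm, h]; exact le_mul_div_of_le hℓ hrb0.1 hrb0.2
  rcases lt_trichotomy i (n - S.h1 k + 1) with hiB | hiB | hiB
  · rcases lt_or_ge i (-(S.h0 k : ℤ) - 1) with hiA | hiA
    · apply left
      rw [S.rearrLeft k h1k hkm i (by omega) (by omega)]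
      rcases (show i + 1 ≤ -(S.h0 k : ℤ) - 1 by omega).lt_or_eq with hlt | heq
      · rw [S.rearrLeft k h1k hkm (i + 1) (by omega) (by omega)]; push_cast; ring
      · rw [← heq, S.rearrMid k h1k hkm (i + 1) (by omega) (by omega),
          show (i : ℝ) = -(S.h0 k : ℝ) - 2 by exact_mod_cast (by omega : i = -(S.h0 k : ℤ) - 2)]
        ring
    · rw [S.rearrMid k h1k hkm i hiA (by omega), S.rearrMid k h1k hkm (i + 1) (by omega) (by omega)]
      exact hprev i hi₀ hi
  · -- particle `n - h1 + 1` has crossed `x = 1`, hence also `x = 0`, so it is not moved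
    have hA : -(S.h0 k : ℤ) - 1 ≤ i := by
      have h1 := (S.cross1 k h1k hkm.le i hi₀ (by omega)).mpr hiB.ge
      have := (S.cross0 k h1k hkm.le i hi₀ (by omega)).mp (zero_lt_one.trans_le h1)
      omega
    apply right
    rw [S.rearrRight k h1k hkm (i + 1) (by omega) (by omega), ← hiB,
      S.rearrMid k h1k hkm i hA hiB.le]
    push_cast
    rw [show (i : ℝ) = n - S.h1 k + 1 by exact_mod_cast hiB]
    ring
  · apply right
    rw [S.rearrRight k h1k hkm i (by omega) (by omega),
      S.rearrRight k h1k hkm (i + 1) (by omega) (by omega)]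
    push_cast; ring

lemma densityBounded (hρ : 0 < ρmax) (hv : ∀ r ∈ Icc 0 ρmax, v r ∈ Icc 0 vmax) {v₀ : ℝ}
    (hvρ' : HasDerivAt v v₀ ρmax) (hvρ : v ρmax = 0)
    (hrbar : ∀ y ∈ Ioo (0:ℝ) 1, rbar y ∈ Icc 0 ρmax) (hrb0 : ∀ t, 0 ≤ t → rb0 t ∈ Ioc 0 ρmax)
    (hrb1 : ∀ t, 0 ≤ t → rb1 t ∈ Ioc 0 ρmax) (hτ : 0 ≤ S.τ) (hℓ : 0 < S.ℓ) (hq : 0 < S.q) :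
    ∀ k < m, ∀ t ∈ Icc (k * S.τ) ((k + 1) * S.τ), S.DensityBounded k t := by
  have hp := S.pmass_pos hq hℓ
  have hrb1' : ∀ k : ℕ, rb1 (k * S.τ) ∈ Icc 0 ρmax := fun k =>
    Ioc_subset_Icc_self (hrb1 _ (by positivity))
  intro k
  induction k with
  | zero =>
    intro hm
    refine densityBounded_of_start hρ hv hvρ' hvρ (hrb1' 0) hp hm ?_
    simpa using densityBounded_zero hℓ hq.le hrbar (hrb0 0 le_rfl)
  | succ k ih =>
    intro hk
    refine densityBounded_of_start hρ hv hvρ' hvρ (hrb1' _) hp hk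
      (densityBounded_rearrange hℓ.le hq.le (hrb0 _ (by positivity)) (hrb1 _ (by positivity))
        (by omega) hk ?_)
    simpa using ih (by omega) ((k + 1) * S.τ) ⟨by nlinarith, le_rfl⟩

variable {u : ℝ}

lemma integral_Iic_dens (hku : kIdx S.τ u = k) (y : ℝ) :
    ∫ z in Iic y, S.dens u z = ∑ i ∈ Finset.Icc (-(S.N : ℤ)) (n - 1),
      blockCDF (pmass S.q S.ℓ S.N i) (S.x k i u) (S.x k (i + 1) u) y := by
  simp only [dens, hku]
  exact integral_Iic_sum_indicator_Ico _ _ _ _ _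

lemma integral_Iic_dens_le (hp : ∀ i, 0 ≤ pmass S.q S.ℓ S.N i) (hk : k < m)
    (hu : u ∈ Icc (k * S.τ) ((k + 1) * S.τ)) (hku : kIdx S.τ u = k) (y : ℝ) :
    ∫ z in Iic y, S.dens u z ≤ ∑ i ∈ Finset.Icc (-(S.N : ℤ)) (n - 1), pmass S.q S.ℓ S.N i := by
  rw [integral_Iic_dens hku]
  refine Finset.sum_le_sum fun i hi => blockCDF_le (hp i) ?_ y
  rw [Finset.mem_Icc] at hi
  exact S.order k hk u hu i hi.1 hi.2

lemma strictMonoOn_x (hk : k < m) (hu : u ∈ Icc (k * S.τ) ((k + 1) * S.τ)) :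
    StrictMonoOn (fun i => S.x k i u) (Icc (-(S.N : ℤ)) n) :=
  strictMonoOn_of_lt_add_one ordConnected_Icc fun i _ hi hi1 =>
    S.order k hk u hu i hi.1 (by linarith [hi1.2])

lemma integral_Iic_dens_leader (hk : k < m) (hu : u ∈ Icc (k * S.τ) ((k + 1) * S.τ))
    (hku : kIdx S.τ u = k) :
    ∫ z in Iic (S.x k n u), S.dens u z =
      ∑ i ∈ Finset.Icc (-(S.N : ℤ)) (n - 1), pmass S.q S.ℓ S.N i := by
  rw [integral_Iic_dens hku]
  refine Finset.sum_congr rfl fun i hi => ?_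
  rw [Finset.mem_Icc] at hi
  exact blockCDF_of_le (S.order k hk u hu i hi.1 hi.2)
    ((strictMonoOn_x hk hu).monotoneOn ⟨by omega, by omega⟩ ⟨by omega, le_rfl⟩ (by omega))

lemma integral_Iic_dens_of_lt (hk : k < m) (hu : u ∈ Icc (k * S.τ) ((k + 1) * S.τ))
    (hku : kIdx S.τ u = k) {y : ℝ} (hy : y < S.x k (-(S.N : ℤ)) u) :
    ∫ z in Iic y, S.dens u z = 0 := by
  rw [integral_Iic_dens hku]
  refine Finset.sum_eq_zero fun i hi => blockCDF_of_le_left (hy.le.trans ?_)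
  rw [Finset.mem_Icc] at hi
  exact (strictMonoOn_x hk hu).monotoneOn ⟨le_rfl, by omega⟩ ⟨hi.1, by omega⟩ hi.1

lemma integral_Iic_dens_le_add (hp : ∀ i, 0 ≤ pmass S.q S.ℓ S.N i) (hk : k < m) {w c : ℝ}
    (hu : u ∈ Icc (k * S.τ) ((k + 1) * S.τ)) (hw : w ∈ Icc (k * S.τ) ((k + 1) * S.τ))
    (hku : kIdx S.τ u = k) (hkw : kIdx S.τ w = k)
    (hshift : ∀ i, -(S.N : ℤ) ≤ i → i ≤ n → S.x k i w ≤ S.x k i u + c) (y : ℝ) :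
    ∫ z in Iic y, S.dens u z ≤ ∫ z in Iic (y + c), S.dens w z := by
  rw [integral_Iic_dens hku, integral_Iic_dens hkw]
  refine Finset.sum_le_sum fun i hi => ?_
  rw [Finset.mem_Icc] at hi
  exact blockCDF_le_add (hp i) (S.order k hk u hu i hi.1 hi.2) (S.order k hk w hw i hi.1 hi.2)
    (hshift i hi.1 (by omega)) (hshift (i + 1) (by omega) (by omega)) y

lemma scaledWass_dens_le (hρ : 0 < ρmax) (hv : ∀ r ∈ Icc 0 ρmax, v r ∈ Icc 0 vmax)
    (hrb1 : rb1 (k * S.τ) ∈ Icc 0 ρmax) (hp : ∀ i, 0 < pmass S.q S.ℓ S.N i) (hτ : 0 < S.τ)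
    (hk : k < m) (hbdd : ∀ t ∈ Icc (k * S.τ) ((k + 1) * S.τ), S.DensityBounded k t) {s : ℝ}
    (hks : k * S.τ < s) (hst : s ≤ t) (htk : t ≤ (k + 1) * S.τ) :
    scaledWass (∑ i ∈ Finset.Icc (-(S.N : ℤ)) (n - 1), pmass S.q S.ℓ S.N i) (S.dens t) (S.dens s)
      ≤ (∑ i ∈ Finset.Icc (-(S.N : ℤ)) (n - 1), pmass S.q S.ℓ S.N i) * (vmax * (t - s)) := by
  have hp₀ : ∀ i, 0 ≤ pmass S.q S.ℓ S.N i := fun i => (hp i).le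
  have hs : s ∈ Icc (k * S.τ) ((k + 1) * S.τ) := ⟨hks.le, hst.trans htk⟩
  have ht : t ∈ Icc (k * S.τ) ((k + 1) * S.τ) := ⟨hks.le.trans hst, htk⟩
  have hks' : kIdx S.τ s = k := kIdx_eq hτ hks (hst.trans htk)
  have hkt' : kIdx S.τ t = k := kIdx_eq hτ (hks.trans_le hst) htk
  have hdisp : ∀ i, -(S.N : ℤ) ≤ i → i ≤ n → |S.x k i t - S.x k i s| ≤ vmax * (t - s) :=
    fun i hi₀ hi => abs_x_sub_le hρ hv hrb1 hp hk hbdd hs ht hst hi₀ hi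
  exact scaledWass_le_mul_of_cdf_shift (Finset.sum_nonneg fun i _ => hp₀ i)
    ((abs_nonneg _).trans (hdisp n (by omega) le_rfl))
    (integral_Iic_dens_le hp₀ hk ht hkt') (integral_Iic_dens_le hp₀ hk hs hks')
    ⟨_, (integral_Iic_dens_leader hk ht hkt').ge⟩ ⟨_, (integral_Iic_dens_leader hk hs hks').ge⟩
    ⟨_, fun x hx => (integral_Iic_dens_of_lt hk ht hkt' hx).le⟩
    ⟨_, fun x hx => (integral_Iic_dens_of_lt hk hs hks' hx).le⟩
    (integral_Iic_dens_le_add hp₀ hk ht hs hkt' hks' fun i hi₀ hi => by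
      linarith [abs_le.mp (hdisp i hi₀ hi)])
    (integral_Iic_dens_le_add hp₀ hk hs ht hks' hkt' fun i hi₀ hi => by
      linarith [abs_le.mp (hdisp i hi₀ hi)])

end FTLibvp

theorem stmt12_general
    -- velocity hypothesis (V1)
    (ρmax vmax δ T : ℝ) (hρmax : 0 < ρmax) (hvmaxpos : 0 < vmax) (hδ : 0 < δ) (hT : 0 < T)
    (v v' : ℝ → ℝ)
    (hv_deriv : ∀ r ∈ Set.Icc (0:ℝ) ρmax, HasDerivAt v (v' r) r)
    (hv_range : ∀ r ∈ Set.Icc (0:ℝ) ρmax, v r ∈ Set.Icc (0:ℝ) vmax)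
    (hvρmax : v ρmax = 0)
    -- initial datum (I3) and boundary data (B)
    (rbar rb0 rb1 : ℝ → ℝ)
    (hrbar_range : ∀ y ∈ Set.Ioo (0:ℝ) 1, rbar y ∈ Set.Icc δ ρmax)
    (hb0_range : ∀ t, 0 ≤ t → rb0 t ∈ Set.Icc δ ρmax)
    (hb1_range : ∀ t, 0 ≤ t → rb1 t ∈ Set.Icc δ ρmax)
    : ∀ n m : ℕ, 1 ≤ n → 1 ≤ m →
      ∀ S : FTLibvp ρmax vmax T v rbar rb0 rb1 n m,
      ∀ k : ℕ, k < m → ∀ s t : ℝ,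
        (k : ℝ) * S.τ < s → s < t → t < ((k : ℝ) + 1) * S.τ →
        scaledWass (S.Q + S.L) (S.dens t) (S.dens s)
          ≤ (3 / 2) * (S.Q + S.L) * vmax * (t - s) := by
  intro n m hn hm S k hk s t hks hst htk
  have hdata : ∀ {r : ℝ → ℝ}, (∀ t, 0 ≤ t → r t ∈ Icc δ ρmax) → ∀ t, 0 ≤ t → r t ∈ Ioc 0 ρmax :=
    fun h t ht => ⟨hδ.trans_le (h t ht).1, (h t ht).2⟩
  have hrbar : ∀ y ∈ Ioo (0:ℝ) 1, rbar y ∈ Icc 0 ρmax := fun y hy =>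
    ⟨hδ.le.trans (hrbar_range y hy).1, (hrbar_range y hy).2⟩
  have hτ := S.tau_pos hT hm
  have hℓ := S.ell_pos hτ.le hm hn fun y hy => (hrbar y hy).1
  have hQ := S.Q_pos hρmax hvmaxpos hT
  have hp := S.pmass_pos (S.q_pos hQ hℓ) hℓ
  have hbdd := S.densityBounded hρmax hv_range (hv_deriv ρmax ⟨hρmax.le, le_rfl⟩) hvρmax hrbar
    (hdata hb0_range) (hdata hb1_range) hτ.le hℓ (S.q_pos hQ hℓ) k hk
  have hrb1 : rb1 (k * S.τ) ∈ Icc 0 ρmax :=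
    Ioc_subset_Icc_self (hdata hb1_range _ (mul_nonneg k.cast_nonneg hτ.le))
  have hW := S.scaledWass_dens_le hρmax hv_range hrb1 hp hτ hk hbdd hks hst.le htk.le
  have hM := Finset.sum_nonneg fun i (_ : i ∈ Finset.Icc (-(S.N : ℤ)) (n - 1)) => (hp i).le
  rw [S.sum_pmass (S.N_pos hQ hℓ) hn] at hW hM
  nlinarith [mul_nonneg hM (sub_nonneg.mpr hst.le), mul_nonneg hM hvmaxpos.le]

/-- **Intra-step Wasserstein continuity for the follow-the-leader scheme with boundary
data**: for `k τ_m < s < t < (k+1) τ_m`,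
`W_{Q+L,1}(ρ^{n,m}(t,·), ρ^{n,m}(s,·)) ≤ (3/2)(Q+L) vmax (t−s)`. -/
theorem stmt12
    -- velocity hypothesis (V1)
    (ρmax vmax δ T : ℝ) (hρmax : 0 < ρmax) (hvmaxpos : 0 < vmax) (hδ : 0 < δ) (hT : 0 < T)
    (v v' : ℝ → ℝ)
    (hv_deriv : ∀ r ∈ Set.Icc (0:ℝ) ρmax, HasDerivAt v (v' r) r)
    (hv'_cont : ContinuousOn v' (Set.Icc (0:ℝ) ρmax))
    (hv'_neg : ∀ r ∈ Set.Icc (0:ℝ) ρmax, v' r < 0)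
    (hv_range : ∀ r ∈ Set.Icc (0:ℝ) ρmax, v r ∈ Set.Icc (0:ℝ) vmax)
    (hv0 : v 0 = vmax) (hvρmax : v ρmax = 0)
    -- initial datum (I3) and boundary data (B)
    (rbar rb0 rb1 : ℝ → ℝ)
    (hrbar_range : ∀ y ∈ Set.Ioo (0:ℝ) 1, rbar y ∈ Set.Icc δ ρmax)
    (hrbar_BV : BoundedVariationOn rbar (Set.Ioo 0 1))
    (hb0_range : ∀ t, 0 ≤ t → rb0 t ∈ Set.Icc δ ρmax)
    (hb1_range : ∀ t, 0 ≤ t → rb1 t ∈ Set.Icc δ ρmax)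
    (K₀ K₁ : ℝ≥0)
    (hb0_lip : LipschitzOnWith K₀ rb0 (Set.Ici 0))
    (hb1_lip : LipschitzOnWith K₁ rb1 (Set.Ici 0))
    (hb0_BV : BoundedVariationOn rb0 (Set.Ici 0))
    (hb1_BV : BoundedVariationOn rb1 (Set.Ici 0))
    : ∀ n m : ℕ, 1 ≤ n → 1 ≤ m →
      ∀ S : FTLibvp ρmax vmax T v rbar rb0 rb1 n m,
      ∀ k : ℕ, k < m → ∀ s t : ℝ,
        (k : ℝ) * S.τ < s → s < t → t < ((k : ℝ) + 1) * S.τ →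
        scaledWass (S.Q + S.L) (S.dens t) (S.dens s)
          ≤ (3 / 2) * (S.Q + S.L) * vmax * (t - s) :=
  stmt12_general ρmax vmax δ T hρmax hvmaxpos hδ hT v v' hv_deriv hv_range hvρmax rbar rb0 rb1
    hrbar_range hb0_range hb1_range
end
end

section
/- Discrete density bounds for the Aw–Rascle–Zhang follow-the-leader system: let p ∈ C⁰([0,∞);[0,∞)) ∩ C²((0,∞)) with p(0⁺) = 0, p'(ρ) > 0 and 2p'(ρ) + ρ p''(ρ) > 0 for ρ > 0. Let ℓ > 0, let w̄₀,…,w̄_{n−1} > 0, and let x̄₀ < x̄₁ < … < x̄ₙ satisfy ℓ ≤ (x̄ᵢ₊₁ − x̄ᵢ)·p⁻¹(w̄ᵢ) for i = 0,…,n−1. Let the particles evolve by xₙ(t) = x̄ₙ + w̄_{n−1} t and ẋᵢ(t) = w̄ᵢ − p(ℓ/(xᵢ₊₁(t) − xᵢ(t))) with xᵢ(0) = x̄ᵢ, and set Rᵢ(t) = ℓ/(xᵢ₊₁(t) − xᵢ(t)). Then for every t ≥ 0 and every i = 0,…,n−1: ℓ/(x̄ₙ − x̄₀ + w̄_{n−1}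 t) ≤ Rᵢ(t) ≤ p⁻¹(w̄ᵢ); in particular x₀(t) ≥ x̄₀ for all t ≥ 0. -/
/-!
Each gap `xᵢ₊₁ − xᵢ` is kept above `ℓ / p⁻¹(w̄ᵢ)` by a barrier argument: if the gap dropped
below that value, the density would exceed `p⁻¹(w̄ᵢ)`, so particle `i` would move backwards,
while particle `i + 1` never does. The latter holds for the leader by assumption and for the
other particles by the bound on the gap in front of them, so a downward induction from the
leader gives both the density bounds and the forward motion of every particle. The lower
density bound follows because all particles lie between `x₀(t) ≥ x̄₀` and the leader.
-/

open Set

lemma le_of_hasDerivWithinAt_Ici_of_lt_imp_pos {g g' : ℝ → ℝ} {a b : ℝ}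
    (hg : ∀ t ∈ Ici a, HasDerivWithinAt g (g' t) (Ici a) t) (ha : b ≤ g a)
    (hpos : ∀ t ∈ Ici a, g t < b → 0 < g' t) : ∀ t ∈ Ici a, b ≤ g t := by
  intro t ht
  -- `g' > 0` is only known strictly below `b`, so compare `g` with the lower fences `b - ε`.
  refine le_of_forall_sub_le fun ε hε => ?_
  refine image_le_of_deriv_right_lt_deriv_boundary' (f' := fun _ => 0) continuousOn_const
    (fun _ _ => hasDerivWithinAt_const _ _ _) (by linarith)
    (fun s hs => (hg s hs.1).continuousWithinAt.mono Icc_subset_Ici_self)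
    (fun s hs => (hg s hs.1).mono (Ici_subset_Ici.2 hs.1))
    (fun s hs hs_eq => hpos s hs.1 (by linarith)) ⟨ht, le_rfl⟩

lemma monotoneOn_Ici_of_hasDerivWithinAt_nonneg {f f' : ℝ → ℝ} {a : ℝ}
    (hf : ∀ t ∈ Ici a, HasDerivWithinAt f (f' t) (Ici a) t) (hf' : ∀ t ∈ Ici a, 0 ≤ f' t) :
    MonotoneOn f (Ici a) :=
  monotoneOn_of_hasDerivWithinAt_nonneg (convex_Ici a) (fun t ht => (hf t ht).continuousWithinAt)
    (fun t ht => (hf t (interior_subset ht)).mono interior_subset)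
    (fun t ht => hf' t (interior_subset ht))

def MovesForward (y : ℝ → ℝ) : Prop :=
  ∃ v : ℝ → ℝ, (∀ t ∈ Ici (0 : ℝ), HasDerivWithinAt y (v t) (Ici 0) t) ∧ ∀ t ∈ Ici (0 : ℝ), 0 ≤ v t

lemma MovesForward.monotoneOn {y : ℝ → ℝ} (hy : MovesForward y) : MonotoneOn y (Ici 0) :=
  let ⟨_, hderiv, hnonneg⟩ := hy
  monotoneOn_Ici_of_hasDerivWithinAt_nonneg hderiv hnonneg

lemma movesForward_affine {a c : ℝ} (hc : 0 ≤ c) : MovesForward fun t => a + c * t :=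
  ⟨fun _ => c, fun t _ => (((hasDerivWithinAt_id t _).const_mul c).const_add a).congr_deriv
    (mul_one c), fun _ _ => hc⟩

lemma sub_le_sub_of_forall_lt_succ {f : ℕ → ℝ} {n i : ℕ} (hf : ∀ j < n, f j < f (j + 1))
    (hi : i < n) : f (i + 1) - f i ≤ f n - f 0 := by
  have hmono : MonotoneOn f (Iic n) := monotoneOn_of_le_succ ordConnected_Iic fun j _ _ hj => by
    simpa only [Order.succ_eq_add_one] using (hf j (by simpa using hj)).le
  have h_top : f (i + 1) ≤ f n := hmono (mem_Iic.2 hi) (mem_Iic.2 le_rfl) hi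
  have h_bot : f 0 ≤ f i := hmono (Nat.zero_le n) (mem_Iic.2 hi.le) (Nat.zero_le i)
  linarith

section FollowTheLeader

variable {p : ℝ → ℝ} {ℓ ρ d : ℝ}

lemma pressure_density_le (hp : StrictMonoOn p (Ioi 0)) (hℓ : 0 < ℓ) (hρ : 0 < ρ) (hd : 0 < d)
    (h : ℓ / ρ ≤ d) : p (ℓ / d) ≤ p ρ :=
  hp.monotoneOn (div_pos hℓ hd) hρ ((div_le_comm₀ hd hρ).2 h)

lemma pressure_lt_density (hp : StrictMonoOn p (Ioi 0)) (hℓ : 0 < ℓ) (hρ : 0 < ρ) (hd : 0 < d)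
    (h : d < ℓ / ρ) : p ρ < p (ℓ / d) :=
  hp hρ (div_pos hℓ hd) ((lt_div_comm₀ hd hρ).1 h)

variable {w : ℝ} {y z : ℝ → ℝ}

lemma MovesForward.gap_ge (hz : MovesForward z) (hp : StrictMonoOn p (Ioi 0)) (hℓ : 0 < ℓ)
    (hρ : 0 < ρ) (hw : p ρ = w)
    (hy : ∀ t ∈ Ici (0 : ℝ), HasDerivWithinAt y (w - p (ℓ / (z t - y t))) (Ici 0) t)
    (hyz : ∀ t ∈ Ici (0 : ℝ), y t < z t) (h0 : ℓ / ρ ≤ z 0 - y 0) :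
    ∀ t ∈ Ici (0 : ℝ), ℓ / ρ ≤ z t - y t := by
  obtain ⟨v, hzv, hv⟩ := hz
  refine le_of_hasDerivWithinAt_Ici_of_lt_imp_pos (fun t ht => (hzv t ht).sub (hy t ht)) h0
    fun t ht hlt => ?_
  have := pressure_lt_density hp hℓ hρ (sub_pos.2 (hyz t ht)) hlt
  linarith [hv t ht]

lemma MovesForward.follower (hz : MovesForward z) (hp : StrictMonoOn p (Ioi 0)) (hℓ : 0 < ℓ)
    (hρ : 0 < ρ) (hw : p ρ = w)
    (hy : ∀ t ∈ Ici (0 : ℝ), HasDerivWithinAt y (w - p (ℓ / (z t - y t))) (Ici 0) t)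
    (hyz : ∀ t ∈ Ici (0 : ℝ), y t < z t) (h0 : ℓ / ρ ≤ z 0 - y 0) :
    MovesForward y :=
  ⟨_, hy, fun t ht => sub_nonneg.2 <| hw ▸ pressure_density_le hp hℓ hρ (sub_pos.2 (hyz t ht))
    (hz.gap_ge hp hℓ hρ hw hy hyz h0 t ht)⟩

end FollowTheLeader

theorem stmt19_general
    -- hypotheses on the pressure p
    (p p' : ℝ → ℝ)
    (hp_deriv : ∀ r ∈ Set.Ioi (0:ℝ), HasDerivAt p (p' r) r)
    (hp'_pos : ∀ r ∈ Set.Ioi (0:ℝ), 0 < p' r)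
    -- data
    (n : ℕ) (hn : 1 ≤ n) (ℓ : ℝ) (hℓ : 0 < ℓ)
    (wbar : ℕ → ℝ) (hwbar : ∀ i, i < n → 0 < wbar i)
    -- `ρimax i = p⁻¹(w̄ᵢ)`
    (ρimax : ℕ → ℝ) (hρimax : ∀ i, i < n → 0 ≤ ρimax i ∧ p (ρimax i) = wbar i)
    -- initial positions
    (xbar : ℕ → ℝ)
    (hinit : ∀ i, i < n → ℓ ≤ (xbar (i+1) - xbar i) * ρimax i)
    -- the particle system
    (x : ℕ → ℝ → ℝ)
    (hleadtraj : ∀ t, x n t = xbar n + wbar (n-1) * t)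
    (hODE : ∀ i, i < n → ∀ t, 0 ≤ t →
        HasDerivWithinAt (x i) (wbar i - p (ℓ / (x (i+1) t - x i t))) (Set.Ici 0) t)
    (hIC : ∀ i, i ≤ n → x i 0 = xbar i)
    (horder : ∀ t, 0 ≤ t → ∀ i, i < n → x i t < x (i+1) t) :
    ∀ t, 0 ≤ t →
      (∀ i, i < n →
        ℓ / (xbar n - xbar 0 + wbar (n-1) * t) ≤ ℓ / (x (i+1) t - x i t) ∧
        ℓ / (x (i+1) t - x i t) ≤ ρimax i) ∧
      xbar 0 ≤ x 0 t := by
  have hp : StrictMonoOn p (Ioi 0) := strictMonoOn_of_hasDerivWithinAt_pos (convex_Ioi 0)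
    (fun r hr => (hp_deriv r hr).continuousAt.continuousWithinAt)
    (fun r hr => (hp_deriv r (interior_subset hr)).hasDerivWithinAt)
    (fun r hr => hp'_pos r (interior_subset hr))
  have hρ : ∀ i < n, 0 < ρimax i := fun i hi =>
    (hρimax i hi).1.lt_of_ne fun h => by have := hinit i hi; rw [← h, mul_zero] at this; linarith
  have hgap0 : ∀ i < n, ℓ / ρimax i ≤ x (i+1) 0 - x i 0 := fun i hi => by
    rw [hIC (i+1) hi, hIC i hi.le, div_le_iff₀ (hρ i hi)]
    exact hinit i hi
  have hleader : MovesForward (x n) :=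
    funext hleadtraj ▸ movesForward_affine (hwbar (n-1) (by omega)).le
  have hfwd : ∀ i ≤ n, MovesForward (x i) := fun i hi =>
    Nat.decreasingInduction (motive := fun i _ => MovesForward (x i))
      (fun j hj hnext => hnext.follower hp hℓ (hρ j hj) (hρimax j hj).2 (hODE j hj)
        (fun t ht => horder t ht j hj) (hgap0 j hj)) hleader hi
  have hx0 : ∀ t ∈ Ici (0 : ℝ), xbar 0 ≤ x 0 t := fun t ht =>
    hIC 0 (Nat.zero_le n) ▸ (hfwd 0 (Nat.zero_le n)).monotoneOn self_mem_Ici ht ht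
  intro t ht
  refine ⟨fun i hi => ⟨?_, ?_⟩, hx0 t ht⟩
  · refine div_le_div_of_nonneg_left hℓ.le (sub_pos.2 (horder t ht i hi)) ?_
    linarith [sub_le_sub_of_forall_lt_succ (f := fun j => x j t) (horder t ht) hi, hleadtraj t,
      hx0 t ht]
  · refine (div_le_comm₀ (sub_pos.2 (horder t ht i hi)) (hρ i hi)).2 ?_
    exact (hfwd (i+1) hi).gap_ge hp hℓ (hρ i hi) (hρimax i hi).2 (hODE i hi)
      (fun t ht => horder t ht i hi) (hgap0 i hi) t ht

/-- **Discrete density bounds for the Aw–Rascle–Zhang follow-the-leader system.**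
With `Rᵢ(t) = ℓ/(xᵢ₊₁(t) − xᵢ(t))` one has
`ℓ/(x̄ₙ − x̄₀ + w̄_{n−1} t) ≤ Rᵢ(t) ≤ p⁻¹(w̄ᵢ)` for all `t ≥ 0` and `i < n`;
in particular `x₀(t) ≥ x̄₀`. -/
theorem stmt19
    -- hypotheses on the pressure p
    (p p' p'' : ℝ → ℝ)
    (hp_cont : ContinuousOn p (Set.Ici 0)) (hp0 : p 0 = 0)
    (hp_deriv : ∀ r ∈ Set.Ioi (0:ℝ), HasDerivAt p (p' r) r)
    (hp'_deriv : ∀ r ∈ Set.Ioi (0:ℝ), HasDerivAt p' (p'' r) r)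
    (hp'_pos : ∀ r ∈ Set.Ioi (0:ℝ), 0 < p' r)
    (hgen : ∀ r ∈ Set.Ioi (0:ℝ), 0 < 2 * p' r + r * p'' r)
    -- data
    (n : ℕ) (hn : 1 ≤ n) (ℓ : ℝ) (hℓ : 0 < ℓ)
    (wbar : ℕ → ℝ) (hwbar : ∀ i, i < n → 0 < wbar i)
    -- `ρimax i = p⁻¹(w̄ᵢ)`
    (ρimax : ℕ → ℝ) (hρimax : ∀ i, i < n → 0 ≤ ρimax i ∧ p (ρimax i) = wbar i)
    -- initial positions
    (xbar : ℕ → ℝ) (hxbar_mono : ∀ i, i < n → xbar i < xbar (i+1))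
    (hinit : ∀ i, i < n → ℓ ≤ (xbar (i+1) - xbar i) * ρimax i)
    -- the particle system
    (x : ℕ → ℝ → ℝ)
    (hleadtraj : ∀ t, x n t = xbar n + wbar (n-1) * t)
    (hODE : ∀ i, i < n → ∀ t, 0 ≤ t →
        HasDerivWithinAt (x i) (wbar i - p (ℓ / (x (i+1) t - x i t))) (Set.Ici 0) t)
    (hIC : ∀ i, i ≤ n → x i 0 = xbar i)
    (horder : ∀ t, 0 ≤ t → ∀ i, i < n → x i t < x (i+1) t) :
    ∀ t, 0 ≤ t →
      (∀ i, i < n →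
        ℓ / (xbar n - xbar 0 + wbar (n-1) * t) ≤ ℓ / (x (i+1) t - x i t) ∧
        ℓ / (x (i+1) t - x i t) ≤ ρimax i) ∧
      xbar 0 ≤ x 0 t :=
  stmt19_general p p' hp_deriv hp'_pos n hn ℓ hℓ wbar hwbar ρimax hρimax xbar hinit x hleadtraj hODE
    hIC horder
end
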